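/- arXiv:1605.03558 — 5 statements merged into one kernel-verified Lean document; each statement's English description precedes it below -/
import Mathlib

section
/- Let Ω be a bounded domain of ℝⁿ and let V : closure(Ω) → [0,∞) be a continuous function. Let x₀ ∈ Ω with V(x₀) = 0 and denote by A₀ the connected component of the zero set 𝒱₀ = {x ∈ closure(Ω) : V(x) = 0} containing x₀. If A₀ ∩ ∂Ω = ∅, then there exist an open connected set Ω₀ and a real number η > 0 such that x₀ ∈ Ω₀, the closure of Ω₀ is a compact subset of Ω, and V(x) ≥ η for all x on the topological boundary ∂Ω₀. -/
open Set Metric Filter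

lemma aux_clopen_sep {X : Type*} [TopologicalSpace X] [T2Space X] [CompactSpace X]
    (x : X) (S : Set X) (hS : IsClosed S) (hdisj : connectedComponent x ∩ S = ∅) :
    ∃ U : Set X, IsClopen U ∧ x ∈ U ∧ U ∩ S = ∅ := by
  have h : S ∩ ⋂ s : { s : Set X // IsClopen s ∧ x ∈ s }, (s : Set X) = ∅ := by
    rw [← connectedComponent_eq_iInter_isClopen, inter_comm]
    exact hdisj
  obtain ⟨t, ht⟩ := hS.isCompact.elim_finite_subfamily_closed _
    (fun s : { s : Set X // IsClopen s ∧ x ∈ s } => s.2.1.1) h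
  refine ⟨⋂ i ∈ t, (i : Set X), isClopen_biInter_finset fun i _ => i.2.1,
    mem_iInter₂.2 fun i _ => i.2.2, ?_⟩
  rw [inter_comm]; exact ht

theorem stmt9
    (n : ℕ)
    (Ω : Set (EuclideanSpace ℝ (Fin n)))
    (hΩ_open : IsOpen Ω) (hΩ_conn : IsConnected Ω) (hΩ_bdd : Bornology.IsBounded Ω)
    (V : EuclideanSpace ℝ (Fin n) → ℝ)
    (hV_cont : ContinuousOn V (closure Ω)) (hV_nonneg : ∀ x ∈ closure Ω, 0 ≤ V x)
    (x₀ : EuclideanSpace ℝ (Fin n)) (hx₀ : x₀ ∈ Ω) (hVx₀ : V x₀ = 0)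
    (hcomp : connectedComponentIn {x ∈ closure Ω | V x = 0} x₀ ∩ frontier Ω = ∅) :
    ∃ Ω₀ : Set (EuclideanSpace ℝ (Fin n)), ∃ η > 0,
      IsOpen Ω₀ ∧ IsConnected Ω₀ ∧ x₀ ∈ Ω₀ ∧ IsCompact (closure Ω₀) ∧ closure Ω₀ ⊆ Ω ∧
      ∀ x ∈ frontier Ω₀, η ≤ V x := by
  set Z : Set (EuclideanSpace ℝ (Fin n)) := {x ∈ closure Ω | V x = 0} with hZdef
  have hx₀Z : x₀ ∈ Z := ⟨subset_closure hx₀, hVx₀⟩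
  have hZsub : Z ⊆ closure Ω := fun x hx => hx.1
  have hZclosed : IsClosed Z := by
    have h := hV_cont.preimage_isClosed_of_isClosed isClosed_closure
      (isClosed_singleton (x := (0:ℝ)))
    exact h
  have hZcomp : IsCompact Z :=
    Metric.isCompact_of_isClosed_isBounded hZclosed (hΩ_bdd.closure.subset hZsub)
  haveI : CompactSpace Z := isCompact_iff_compactSpace.mp hZcomp
  set y₀ : Z := ⟨x₀, hx₀Z⟩ with hy₀
  set S : Set Z := Subtype.val ⁻¹' (frontier Ω) with hSdef
  have hS : IsClosed S := isClosed_frontier.preimage continuous_subtype_val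
  have hdisj : connectedComponent y₀ ∩ S = ∅ := by
    rw [eq_empty_iff_forall_notMem]
    rintro z ⟨hz1, hz2⟩
    have : (z : EuclideanSpace ℝ (Fin n)) ∈ connectedComponentIn Z x₀ ∩ frontier Ω := by
      rw [connectedComponentIn_eq_image hx₀Z]
      exact ⟨⟨z, hz1, rfl⟩, hz2⟩
    rw [hcomp] at this
    exact this
  obtain ⟨U, hUclopen, hy₀U, hUS⟩ := aux_clopen_sep y₀ S hS hdisj
  set C : Set (EuclideanSpace ℝ (Fin n)) := Subtype.val '' U with hCdef
  have hCcomp : IsCompact C :=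
    (hUclopen.isClosed.isCompact).image continuous_subtype_val
  have hCZ : C ⊆ Z := by rintro y ⟨z, _, rfl⟩; exact z.2
  have hCfr : C ∩ frontier Ω = ∅ := by
    rw [eq_empty_iff_forall_notMem]
    rintro y ⟨⟨z, hz, rfl⟩, hfr⟩
    have : z ∈ U ∩ S := ⟨hz, hfr⟩
    rw [hUS] at this
    exact this
  have hCΩ : C ⊆ Ω := by
    intro y hy
    have hycl : y ∈ closure Ω := hZsub (hCZ hy)
    rw [closure_eq_interior_union_frontier] at hycl
    rcases hycl with h | h
    · rwa [hΩ_open.interior_eq] at h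
    · exact (eq_empty_iff_forall_notMem.mp hCfr y ⟨hy, h⟩).elim
  have hKcomp : IsCompact (Z \ C) := by
    have h : Z \ C = Subtype.val '' (Uᶜ : Set Z) := by
      ext y
      constructor
      · rintro ⟨hyZ, hyC⟩
        exact ⟨⟨y, hyZ⟩, fun hU => hyC ⟨⟨y, hyZ⟩, hU, rfl⟩, rfl⟩
      · rintro ⟨z, hz, rfl⟩
        refine ⟨z.2, ?_⟩
        rintro ⟨w, hw, hwz⟩
        exact hz (by rwa [Subtype.val_injective hwz] at hw)
    rw [h]
    exact (hUclopen.compl.isClosed.isCompact).image continuous_subtype_val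
  have hTopen : IsOpen (Ω \ (Z \ C)) := hΩ_open.sdiff hKcomp.isClosed
  have hCT : C ⊆ Ω \ (Z \ C) := fun y hy => ⟨hCΩ hy, fun h => h.2 hy⟩
  obtain ⟨ε, hε, hth⟩ := hCcomp.exists_cthickening_subset_open hTopen hCT
  set W : Set (EuclideanSpace ℝ (Fin n)) := thickening ε C with hWdef
  have hWopen : IsOpen W := isOpen_thickening
  have hCW : C ⊆ W := self_subset_thickening hε C
  have hx₀W : x₀ ∈ W := hCW ⟨y₀, hy₀U, rfl⟩
  have hclW : closure W ⊆ cthickening ε C := closure_thickening_subset_cthickening ε C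
  have hcth : IsCompact (cthickening ε C) := hCcomp.cthickening
  set Ω₀ : Set (EuclideanSpace ℝ (Fin n)) := connectedComponentIn W x₀ with hΩ₀def
  have hopen₀ : IsOpen Ω₀ := hWopen.connectedComponentIn
  have hconn₀ : IsConnected Ω₀ := isConnected_connectedComponentIn_iff.mpr hx₀W
  have hmem₀ : x₀ ∈ Ω₀ := mem_connectedComponentIn hx₀W
  have hsubW : Ω₀ ⊆ W := connectedComponentIn_subset W x₀
  have hclsubcth : closure Ω₀ ⊆ cthickening ε C := (closure_mono hsubW).trans hclW
  have hclsub : closure Ω₀ ⊆ Ω := hclsubcth.trans (hth.trans diff_subset)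
  have hcpt : IsCompact (closure Ω₀) := hcth.of_isClosed_subset isClosed_closure hclsubcth
  have hfrW : ∀ x ∈ frontier Ω₀, x ∉ W := by
    intro x hxfr hxW
    rw [hopen₀.frontier_eq] at hxfr
    have hpre : IsPreconnected (insert x Ω₀) :=
      hconn₀.isPreconnected.subset_closure (subset_insert x Ω₀)
        (insert_subset hxfr.1 subset_closure)
    have : insert x Ω₀ ⊆ connectedComponentIn W x₀ :=
      hpre.subset_connectedComponentIn (mem_insert_of_mem x hmem₀)
        (insert_subset hxW hsubW)
    exact hxfr.2 (this (mem_insert x Ω₀))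
  have hfrsub : frontier Ω₀ ⊆ closure Ω₀ := frontier_subset_closure
  have hposV : ∀ x ∈ frontier Ω₀, 0 < V x := by
    intro x hx
    have hxΩ : x ∈ Ω := hclsub (hfrsub hx)
    rcases (hV_nonneg x (subset_closure hxΩ)).lt_or_eq with h | h
    · exact h
    · exfalso
      have hxZ : x ∈ Z := ⟨subset_closure hxΩ, h.symm⟩
      have hxT : x ∈ Ω \ (Z \ C) := hth (hclsubcth (hfrsub hx))
      have hxC : x ∈ C := by
        by_contra hxc
        exact hxT.2 ⟨hxZ, hxc⟩
      exact hfrW x hx (hCW hxC)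
  have hfrcomp : IsCompact (frontier Ω₀) := hcpt.of_isClosed_subset isClosed_frontier hfrsub
  rcases eq_empty_or_nonempty (frontier Ω₀) with he | hne
  · exact ⟨Ω₀, 1, one_pos, hopen₀, hconn₀, hmem₀, hcpt, hclsub,
      by simp [he]⟩
  · obtain ⟨z, hz, hmin⟩ := hfrcomp.exists_isMinOn hne
      (hV_cont.mono (fun y hy => subset_closure (hclsub (hfrsub hy))))
    exact ⟨Ω₀, V z, hposV z hz, hopen₀, hconn₀, hmem₀, hcpt, hclsub,
      fun x hx => hmin hx⟩
end

section
/- Let Ω be a bounded domain of ℝⁿ and let V : closure(Ω) → [0,∞) be a continuous function. Let x₀ ∈ Ω with V(x₀) = 0. For each integer m ≥ 1, let A_m denote the connected component of {x ∈ closure(Ω) : V(x) ≤ 1/m} containing x₀, and let A₀ denote the connected component of {x ∈ closure(Ω) : V(x) = 0} containing x₀. If A₀ ∩ ∂Ω = ∅, then there exists an integer m ≥ 1 such that A_m ∩ ∂Ω = ∅. -/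
open Set Metric Filter

lemma isCompact_connectedComponentIn {X : Type*} [TopologicalSpace X]
    {F : Set X} (hF : IsCompact F) {x : X} :
    IsCompact (connectedComponentIn F x) := by
  by_cases hx : x ∈ F
  · rw [connectedComponentIn_eq_image hx]
    have : CompactSpace F := isCompact_iff_compactSpace.mp hF
    exact (isClosed_connectedComponent.isCompact).image continuous_subtype_val
  · rw [connectedComponentIn_eq_empty hx]; exact isCompact_empty

/-- If `y` is not in the connected component of `x₀` in a compact set `S₀` (in a T2 space),
then there are disjoint open sets `U, W` with `x₀ ∈ U`, `y ∈ W`, `S₀ ⊆ U ∪ W`. -/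
lemma exists_open_separation {X : Type*} [TopologicalSpace X] [T2Space X]
    {S₀ : Set X} (hS₀ : IsCompact S₀) {x₀ y : X} (hx₀ : x₀ ∈ S₀) (hy : y ∈ S₀)
    (hyA : y ∉ connectedComponentIn S₀ x₀) :
    ∃ U W : Set X, IsOpen U ∧ IsOpen W ∧ Disjoint U W ∧ x₀ ∈ U ∧ y ∈ W ∧ S₀ ⊆ U ∪ W := by
  have : CompactSpace S₀ := isCompact_iff_compactSpace.mp hS₀
  set p : S₀ := ⟨x₀, hx₀⟩
  set q : S₀ := ⟨y, hy⟩
  have hq : q ∉ connectedComponent p := by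
    intro hq
    exact hyA (by rw [connectedComponentIn_eq_image hx₀]; exact ⟨q, hq, rfl⟩)
  rw [connectedComponent_eq_iInter_isClopen, mem_iInter] at hq
  push_neg at hq
  obtain ⟨⟨Z, hZclopen, hpZ⟩, hqZ⟩ := hq
  -- `F = val '' Z`, `G = val '' Zᶜ` are disjoint compacts covering S₀
  have hFc : IsCompact ((↑) '' Z : Set X) :=
    (hZclopen.1.isCompact).image continuous_subtype_val
  have hGc : IsCompact ((↑) '' Zᶜ : Set X) :=
    (hZclopen.2.isClosed_compl.isCompact).image continuous_subtype_val
  have hdisj : Disjoint ((↑) '' Z : Set X) ((↑) '' Zᶜ) := by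
    rw [Set.disjoint_left]
    rintro _ ⟨a, ha, rfl⟩ ⟨b, hb, hab⟩
    exact hb ((Subtype.val_injective hab) ▸ ha)
  obtain ⟨U, W, hUo, hWo, hFU, hGW, hUW⟩ :=
    SeparatedNhds.of_isCompact_isCompact hFc hGc hdisj
  refine ⟨U, W, hUo, hWo, hUW, hFU ⟨p, hpZ, rfl⟩, hGW ⟨q, hqZ, rfl⟩, ?_⟩
  intro z hz
  by_cases hzZ : (⟨z, hz⟩ : S₀) ∈ Z
  · exact Or.inl (hFU ⟨_, hzZ, rfl⟩)
  · exact Or.inr (hGW ⟨_, hzZ, rfl⟩)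

theorem stmt11
    (n : ℕ)
    (Ω : Set (EuclideanSpace ℝ (Fin n)))
    (hΩ_open : IsOpen Ω) (hΩ_conn : IsConnected Ω) (hΩ_bdd : Bornology.IsBounded Ω)
    (V : EuclideanSpace ℝ (Fin n) → ℝ)
    (hV_cont : ContinuousOn V (closure Ω)) (hV_nonneg : ∀ x ∈ closure Ω, 0 ≤ V x)
    (x₀ : EuclideanSpace ℝ (Fin n)) (hx₀ : x₀ ∈ Ω) (hVx₀ : V x₀ = 0)
    (hcomp : connectedComponentIn {x ∈ closure Ω | V x = 0} x₀ ∩ frontier Ω = ∅) :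
    ∃ m : ℕ, 1 ≤ m ∧
      connectedComponentIn {x ∈ closure Ω | V x ≤ 1 / (m : ℝ)} x₀ ∩ frontier Ω = ∅ := by
  by_contra hcon
  push_neg at hcon
  have hKc : IsCompact (closure Ω) := hΩ_bdd.isCompact_closure
  set S : ℕ → Set (EuclideanSpace ℝ (Fin n)) :=
    fun m => {x ∈ closure Ω | V x ≤ 1 / (m : ℝ)} with hS
  set S₀ : Set (EuclideanSpace ℝ (Fin n)) := {x ∈ closure Ω | V x = 0} with hS₀
  have hx₀cl : x₀ ∈ closure Ω := subset_closure hx₀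
  have hx₀S : ∀ m, x₀ ∈ S m := fun m => ⟨hx₀cl, by rw [hVx₀]; positivity⟩
  have hx₀S₀ : x₀ ∈ S₀ := ⟨hx₀cl, hVx₀⟩
  have hSclosed : ∀ m, IsClosed (S m) := fun m =>
    hV_cont.preimage_isClosed_of_isClosed isClosed_closure isClosed_Iic
  have hScompact : ∀ m, IsCompact (S m) := fun m =>
    (hKc.of_isClosed_subset (hSclosed m)) (fun x hx => hx.1)
  set A : ℕ → Set (EuclideanSpace ℝ (Fin n)) :=
    fun m => connectedComponentIn (S (m + 1)) x₀ with hA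
  have hAcompact : ∀ m, IsCompact (A m) := fun m =>
    isCompact_connectedComponentIn (hScompact (m + 1))
  have hAanti : Antitone A := by
    intro i j hij
    apply connectedComponentIn_mono
    rintro x ⟨hx1, hx2⟩
    refine ⟨hx1, hx2.trans ?_⟩
    apply one_div_le_one_div_of_le
    · positivity
    · exact_mod_cast Nat.succ_le_succ hij
  have hAdir : Directed (· ⊇ ·) A := fun i j =>
    ⟨max i j, hAanti (le_max_left i j), hAanti (le_max_right i j)⟩
  -- each A m meets the frontier
  have hAfr : ∀ m, (A m ∩ frontier Ω).Nonempty := by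
    intro m
    exact hcon (m + 1) (Nat.le_add_left 1 m)
  -- get y in the intersection of all A m ∩ frontier Ω
  obtain ⟨y, hy⟩ := IsCompact.nonempty_iInter_of_directed_nonempty_isCompact_isClosed
    (fun m => A m ∩ frontier Ω)
    (fun i j => by
      obtain ⟨k, hk1, hk2⟩ := hAdir i j
      exact ⟨k, Set.inter_subset_inter_left _ hk1, Set.inter_subset_inter_left _ hk2⟩)
    hAfr
    (fun m => (hAcompact m).inter_right isClosed_frontier)
    (fun m => ((hAcompact m).isClosed).inter isClosed_frontier)
  simp only [Set.mem_iInter, Set.mem_inter_iff] at hy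
  have hyA : ∀ m, y ∈ A m := fun m => (hy m).1
  have hyfr : y ∈ frontier Ω := (hy 0).2
  have hycl : y ∈ closure Ω := ((connectedComponentIn_subset _ _) (hyA 0)).1
  -- V y = 0
  have hVy : V y = 0 := by
    have hle : ∀ m : ℕ, V y ≤ 1 / ((m : ℝ) + 1) := by
      intro m
      have := (connectedComponentIn_subset _ _) (hyA m)
      exact_mod_cast this.2
    have : V y ≤ 0 := by
      by_contra h
      push_neg at h
      obtain ⟨m, hm⟩ := exists_nat_one_div_lt h
      exact absurd (hle m) (not_le.mpr hm)
    linarith [hV_nonneg y hycl]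
  have hyS₀ : y ∈ S₀ := ⟨hycl, hVy⟩
  -- y cannot be in A₀ = connectedComponentIn S₀ x₀, by hcomp
  have hynA₀ : y ∉ connectedComponentIn S₀ x₀ := by
    intro h
    have : y ∈ connectedComponentIn S₀ x₀ ∩ frontier Ω := ⟨h, hyfr⟩
    rw [hcomp] at this
    exact this
  -- compactness of S₀
  have hS₀closed : IsClosed S₀ := by
    have : S₀ = closure Ω ∩ V ⁻¹' {0} := by
      ext x; simp [hS₀, Set.mem_setOf_eq]
    rw [this]
    exact hV_cont.preimage_isClosed_of_isClosed isClosed_closure isClosed_singleton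
  have hS₀compact : IsCompact S₀ := hKc.of_isClosed_subset hS₀closed (fun x hx => hx.1)
  -- separate
  obtain ⟨U, W, hUo, hWo, hUW, hx₀U, hyW, hS₀sub⟩ :=
    exists_open_separation hS₀compact hx₀S₀ hyS₀ hynA₀
  -- there is m with A m ⊆ U ∪ W
  have hexm : ∃ m, A m ⊆ U ∪ W := by
    by_contra h
    push_neg at h
    obtain ⟨z, hz⟩ := IsCompact.nonempty_iInter_of_directed_nonempty_isCompact_isClosed
      (fun m => A m \ (U ∪ W))
      (fun i j => by
        obtain ⟨k, hk1, hk2⟩ := hAdir i j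
        exact ⟨k, Set.diff_subset_diff_left hk1, Set.diff_subset_diff_left hk2⟩)
      (fun m => by
        obtain ⟨w, hw1, hw2⟩ := Set.not_subset.mp (h m)
        exact ⟨w, hw1, hw2⟩)
      (fun m => (hAcompact m).diff (hUo.union hWo))
      (fun m => ((hAcompact m).isClosed).sdiff (hUo.union hWo))
    simp only [Set.mem_iInter, Set.mem_diff] at hz
    -- z ∈ all A m, so V z = 0, so z ∈ S₀ ⊆ U ∪ W, contradiction
    have hzcl : z ∈ closure Ω := ((connectedComponentIn_subset _ _) (hz 0).1).1
    have hVz : V z = 0 := by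
      have hle : ∀ m : ℕ, V z ≤ 1 / ((m : ℝ) + 1) := by
        intro m
        have := (connectedComponentIn_subset _ _) (hz m).1
        exact_mod_cast this.2
      have : V z ≤ 0 := by
        by_contra h'
        push_neg at h'
        obtain ⟨m, hm⟩ := exists_nat_one_div_lt h'
        exact absurd (hle m) (not_le.mpr hm)
      linarith [hV_nonneg z hzcl]
    exact (hz 0).2 (hS₀sub ⟨hzcl, hVz⟩)
  obtain ⟨m, hm⟩ := hexm
  -- A m is preconnected, meets U (at x₀) and W (at y), contradiction
  have hpre : IsPreconnected (A m) := isPreconnected_connectedComponentIn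
  obtain ⟨w, hw⟩ := hpre U W hUo hWo hm
    ⟨x₀, mem_connectedComponentIn (hx₀S (m + 1)), hx₀U⟩
    ⟨y, hyA m, hyW⟩
  exact Set.disjoint_left.mp hUW hw.2.1 hw.2.2
end

section
/- For every integer n ≥ 1, every R > 0 and every σ ∈ (0,2), there exist a function φ : ℝⁿ → ℝ of class C² and a constant C > 0 (depending only on R, n and σ) such that: 0 ≤ φ(x) ≤ 1 for all x; φ(x) = 0 whenever |x| ≥ 2R/3; φ(x) = 1 whenever |x| ≤ R/2; and |∇φ(x)|² + |Δ(φ²)(x)| ≤ C·φ(x)^σ for all x ∈ ℝⁿ, where φ² denotes the pointwise square of φ. -/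
/-!
Take `φ = f ^ m` for a smooth bump `f` with `0 ≤ f ≤ 1`, equal to `1` on the ball of radius
`R / 2` and vanishing outside the ball of radius `2R / 3`. By the chain rule `|∇φ|²` is
`O(f ^ (2m - 2))`, and so is `Δ(φ²) = Δ(f ^ (2m))`, whose second derivatives are
`2m f ^ (2m - 1) ∂ᵢ²f + 2m (2m - 1) f ^ (2m - 2) (∂ᵢf)²`. Choosing `m ≥ 2 / (2 - σ)` gives
`mσ ≤ 2m - 2`, hence `f ^ (2m - 2) ≤ f ^ (mσ) = φ ^ σ` since `0 ≤ f ≤ 1`.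
-/

open Set Metric Filter

noncomputable def lap {n : ℕ} (g : EuclideanSpace ℝ (Fin n) → ℝ)
    (x : EuclideanSpace ℝ (Fin n)) : ℝ :=
  ∑ i : Fin n, fderiv ℝ (fun y => fderiv ℝ g y (EuclideanSpace.single i 1)) x
    (EuclideanSpace.single i 1)

theorem exists_pos_nat_mul_le_two_mul_sub_two {σ : ℝ} (hσ : σ < 2) :
    ∃ m : ℕ, 0 < m ∧ (m : ℝ) * σ ≤ (2 * m - 2 : ℕ) := by
  have h2σ : 0 < 2 - σ := by linarith
  refine ⟨⌈2 / (2 - σ)⌉₊, Nat.ceil_pos.mpr (by positivity), ?_⟩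
  have hm : 2 / (2 - σ) * (2 - σ) ≤ ⌈2 / (2 - σ)⌉₊ * (2 - σ) :=
    mul_le_mul_of_nonneg_right (Nat.le_ceil _) h2σ.le
  rw [div_mul_cancel₀ _ h2σ.ne'] at hm
  have h1 : 1 ≤ ⌈2 / (2 - σ)⌉₊ := Nat.ceil_pos.mpr (by positivity)
  push_cast [Nat.cast_sub (by omega : 2 ≤ 2 * ⌈2 / (2 - σ)⌉₊)]
  linarith

theorem pow_le_rpow_of_mul_le {t σ : ℝ} (h0 : 0 ≤ t) (h1 : t ≤ 1) (hσ : 0 ≤ σ) {m k : ℕ}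
    (h : m * σ ≤ k) : t ^ k ≤ (t ^ m) ^ σ := by
  rw [← Real.rpow_natCast_mul h0, ← Real.rpow_natCast]
  exact Real.rpow_le_rpow_of_exponent_ge' h0 h1 (by positivity) h

section PowDerivatives

variable {E : Type*} [NormedAddCommGroup E] [NormedSpace ℝ E] {f : E → ℝ}

theorem fderiv_pow_apply {x : E} (hf : DifferentiableAt ℝ f x) (k : ℕ) (v : E) :
    fderiv ℝ (fun z => f z ^ k) x v = k * f x ^ (k - 1) * fderiv ℝ f x v := by
  simp [fderiv_fun_pow k hf]

theorem norm_fderiv_pow_sq_le {x : E} {A : ℝ} (hf : DifferentiableAt ℝ f x) (h0 : 0 ≤ f x)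
    (m : ℕ) (hA : ‖fderiv ℝ f x‖ ≤ A) :
    ‖fderiv ℝ (fun y => f y ^ m) x‖ ^ 2 ≤ m ^ 2 * A ^ 2 * f x ^ (2 * m - 2) := by
  have hexp : f x ^ (2 * m - 2) = (f x ^ (m - 1)) ^ 2 := by
    rw [← pow_mul]; congr 1; omega
  rw [fderiv_fun_pow m hf, norm_smul, nsmul_eq_mul, Real.norm_of_nonneg (by positivity), hexp]
  calc _ = ((m : ℝ) ^ 2 * (f x ^ (m - 1)) ^ 2) * ‖fderiv ℝ f x‖ ^ 2 := by ring
    _ ≤ ((m : ℝ) ^ 2 * (f x ^ (m - 1)) ^ 2) * A ^ 2 := by gcongr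
    _ = _ := by ring

theorem fderiv_fderiv_pow_apply (hf : ContDiff ℝ 2 f) (k : ℕ) (x v : E) :
    fderiv ℝ (fun y => fderiv ℝ (fun z => f z ^ k) y v) x v =
      k * f x ^ (k - 1) * fderiv ℝ (fderiv ℝ f) x v v
        + k * (k - 1 : ℕ) * f x ^ (k - 2) * fderiv ℝ f x v ^ 2 := by
  have hf1 : Differentiable ℝ f := hf.differentiable (by norm_num)
  have hf2 : Differentiable ℝ (fderiv ℝ f) :=
    (hf.fderiv_right (m := 1) (by norm_num)).differentiable (by norm_num)
  have hfun : (fun y => fderiv ℝ (fun z => f z ^ k) y v) =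
      fun y => (k * f y ^ (k - 1)) * fderiv ℝ f y v := by
    funext y; rw [fderiv_pow_apply (hf1 y)]
  have hpow : HasFDerivAt (fun y => (k : ℝ) * f y ^ (k - 1))
      ((k : ℝ) • (((k - 1 : ℕ) : ℝ) * f x ^ (k - 1 - 1)) • fderiv ℝ f x) x := by
    simpa [nsmul_eq_mul] using ((hf1 x).hasFDerivAt.pow (k - 1)).const_mul (k : ℝ)
  have happly : HasFDerivAt (fun y => fderiv ℝ f y v)
      ((ContinuousLinearMap.apply ℝ ℝ v).comp (fderiv ℝ (fderiv ℝ f) x)) x :=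
    (ContinuousLinearMap.apply ℝ ℝ v).hasFDerivAt.comp x (hf2 x).hasFDerivAt
  rw [hfun, (hpow.fun_mul happly).fderiv]
  simp only [add_apply, smul_apply, ContinuousLinearMap.comp_apply,
    ContinuousLinearMap.apply_apply, smul_eq_mul, Nat.sub_sub]
  ring

theorem abs_fderiv_fderiv_pow_apply_le (hf : ContDiff ℝ 2 f) (k : ℕ) {x v : E} {A B : ℝ}
    (hv : ‖v‖ ≤ 1) (h0 : 0 ≤ f x) (h1 : f x ≤ 1) (hA : ‖fderiv ℝ f x‖ ≤ A)
    (hB : ‖fderiv ℝ (fderiv ℝ f) x‖ ≤ B) :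
    |fderiv ℝ (fun y => fderiv ℝ (fun z => f z ^ k) y v) x v| ≤
      (k * B + k ^ 2 * A ^ 2) * f x ^ (k - 2) := by
  have hDf : |fderiv ℝ f x v| ≤ A :=
    calc |fderiv ℝ f x v| ≤ ‖fderiv ℝ f x‖ * ‖v‖ := (fderiv ℝ f x).le_opNorm v
      _ ≤ ‖fderiv ℝ f x‖ * 1 := by gcongr
      _ ≤ A := by simpa using hA
  have hD2f : |fderiv ℝ (fderiv ℝ f) x v v| ≤ B :=
    calc |fderiv ℝ (fderiv ℝ f) x v v| ≤ ‖fderiv ℝ (fderiv ℝ f) x‖ * ‖v‖ * ‖v‖ :=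
          (fderiv ℝ (fderiv ℝ f) x).le_opNorm₂ v v
      _ ≤ ‖fderiv ℝ (fderiv ℝ f) x‖ * 1 * 1 := by gcongr
      _ ≤ B := by simpa using hB
  have hpow : f x ^ (k - 1) ≤ f x ^ (k - 2) := pow_le_pow_of_le_one h0 h1 (by omega)
  have hk : ((k - 1 : ℕ) : ℝ) ≤ k := by exact_mod_cast Nat.sub_le k 1
  have hsq : fderiv ℝ f x v ^ 2 ≤ A ^ 2 := sq_le_sq' (abs_le.mp hDf).1 (abs_le.mp hDf).2
  rw [fderiv_fderiv_pow_apply hf]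
  calc _ ≤ |k * f x ^ (k - 1) * fderiv ℝ (fderiv ℝ f) x v v|
          + |k * (k - 1 : ℕ) * f x ^ (k - 2) * fderiv ℝ f x v ^ 2| := abs_add_le _ _
    _ = k * f x ^ (k - 1) * |fderiv ℝ (fderiv ℝ f) x v v|
          + k * (k - 1 : ℕ) * f x ^ (k - 2) * fderiv ℝ f x v ^ 2 := by
        have hc1 : (0 : ℝ) ≤ k * f x ^ (k - 1) := by positivity
        have hc2 : (0 : ℝ) ≤ k * (k - 1 : ℕ) * f x ^ (k - 2) * fderiv ℝ f x v ^ 2 := by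
          positivity
        rw [abs_mul, abs_of_nonneg hc1, abs_of_nonneg hc2]
    _ ≤ k * f x ^ (k - 2) * B + k * k * f x ^ (k - 2) * A ^ 2 := by gcongr
    _ = (k * B + k ^ 2 * A ^ 2) * f x ^ (k - 2) := by ring

theorem HasCompactSupport.exists_bound_fderiv_fderiv (hf : ContDiff ℝ 2 f)
    (hc : HasCompactSupport f) :
    ∃ A B, (∀ x, ‖fderiv ℝ f x‖ ≤ A) ∧ ∀ x, ‖fderiv ℝ (fderiv ℝ f) x‖ ≤ B := by
  obtain ⟨A, hA⟩ := (hc.fderiv ℝ).exists_bound_of_continuous (hf.continuous_fderiv (by norm_num))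
  have hf2 : ContDiff ℝ 1 (fderiv ℝ f) := hf.fderiv_right (by norm_num)
  obtain ⟨B, hB⟩ := ((hc.fderiv ℝ).fderiv ℝ |>.comp_left (norm_zero (E := E →L[ℝ] E →L[ℝ] ℝ)))
    |>.exists_bound_of_continuous (hf2.continuous_fderiv one_ne_zero).norm
  exact ⟨A, B, hA, fun x => (Real.le_norm_self _).trans (hB x)⟩

end PowDerivatives

theorem abs_lap_le {n : ℕ} {g : EuclideanSpace ℝ (Fin n) → ℝ} {x : EuclideanSpace ℝ (Fin n)}
    {c : ℝ} (h : ∀ i, |fderiv ℝ (fun y => fderiv ℝ g y (EuclideanSpace.single i 1)) x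
      (EuclideanSpace.single i 1)| ≤ c) :
    |lap g x| ≤ n * c :=
  (Finset.abs_sum_le_sum_abs _ _).trans
    ((Finset.sum_le_card_nsmul _ _ _ fun i _ => h i).trans_eq (by simp))

theorem exists_norm_fderiv_pow_sq_add_abs_lap_le {n : ℕ} {f : EuclideanSpace ℝ (Fin n) → ℝ}
    (hf : ContDiff ℝ 2 f) (hc : HasCompactSupport f) (h0 : ∀ x, 0 ≤ f x) (h1 : ∀ x, f x ≤ 1)
    (m : ℕ) :
    ∃ C > 0, ∀ x, ‖fderiv ℝ (fun y => f y ^ m) x‖ ^ 2 + |lap (fun y => (f y ^ m) ^ 2) x| ≤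
      C * f x ^ (2 * m - 2) := by
  obtain ⟨A, B, hA, hB⟩ := hc.exists_bound_fderiv_fderiv hf
  have hB0 : 0 ≤ B := (norm_nonneg (fderiv ℝ (fderiv ℝ f) 0)).trans (hB 0)
  set D : ℝ := (2 * m : ℕ) * B + (2 * m : ℕ) ^ 2 * A ^ 2
  refine ⟨m ^ 2 * A ^ 2 + n * D + 1, by positivity, fun x => ?_⟩
  have hgrad := norm_fderiv_pow_sq_le (hf.differentiable (by norm_num) x) (h0 x) m (hA x)
  have hlap : |lap (fun y => (f y ^ m) ^ 2) x| ≤ n * (D * f x ^ (2 * m - 2)) := by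
    simp_rw [← pow_mul']
    refine abs_lap_le fun i => abs_fderiv_fderiv_pow_apply_le hf _ ?_ (h0 x) (h1 x) (hA x) (hB x)
    simp
  calc _ ≤ m ^ 2 * A ^ 2 * f x ^ (2 * m - 2) + n * (D * f x ^ (2 * m - 2)) :=
        add_le_add hgrad hlap
    _ = (m ^ 2 * A ^ 2 + n * D) * f x ^ (2 * m - 2) := by ring
    _ ≤ (m ^ 2 * A ^ 2 + n * D + 1) * f x ^ (2 * m - 2) :=
        mul_le_mul_of_nonneg_right (by linarith) (pow_nonneg (h0 x) _)

theorem stmt12_general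
    (n : ℕ) (R σ : ℝ) (hR : 0 < R) (hσ : σ ∈ Ioo (0:ℝ) 2) :
    ∃ φ : EuclideanSpace ℝ (Fin n) → ℝ, ∃ C > 0,
      ContDiff ℝ 2 φ ∧
      (∀ x, 0 ≤ φ x ∧ φ x ≤ 1) ∧
      (∀ x, 2 * R / 3 ≤ ‖x‖ → φ x = 0) ∧
      (∀ x, ‖x‖ ≤ R / 2 → φ x = 1) ∧
      (∀ x, ‖fderiv ℝ φ x‖ ^ 2 + |lap (fun y => (φ y) ^ 2) x| ≤ C * φ x ^ σ) := by
  obtain ⟨m, hm, hmσ⟩ := exists_pos_nat_mul_le_two_mul_sub_two hσ.2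
  let f : ContDiffBump (0 : EuclideanSpace ℝ (Fin n)) :=
    ⟨R / 2, 2 * R / 3, by positivity, by linarith⟩
  have h0 (x) : 0 ≤ f x := f.nonneg
  have h1 (x) : f x ≤ 1 := f.le_one
  obtain ⟨C, hC, hbound⟩ :=
    exists_norm_fderiv_pow_sq_add_abs_lap_le f.contDiff f.hasCompactSupport h0 h1 m
  refine ⟨fun x => f x ^ m, C, hC, f.contDiff.pow m,
    fun x => ⟨pow_nonneg (h0 x) m, pow_le_one₀ (h0 x) (h1 x)⟩, fun x hx => ?_, fun x hx => ?_,
    fun x => (hbound x).trans ?_⟩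
  · show f x ^ m = 0
    rw [f.zero_of_le_dist (by simpa using hx), zero_pow hm.ne']
  · show f x ^ m = 1
    rw [f.one_of_mem_closedBall (by simpa using hx), one_pow]
  · exact mul_le_mul_of_nonneg_left (pow_le_rpow_of_mul_le (h0 x) (h1 x) hσ.1.le hmσ) hC.le

theorem stmt12
    (n : ℕ) (hn : 1 ≤ n) (R σ : ℝ) (hR : 0 < R) (hσ : σ ∈ Ioo (0:ℝ) 2) :
    ∃ φ : EuclideanSpace ℝ (Fin n) → ℝ, ∃ C > 0,
      ContDiff ℝ 2 φ ∧
      (∀ x, 0 ≤ φ x ∧ φ x ≤ 1) ∧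
      (∀ x, 2 * R / 3 ≤ ‖x‖ → φ x = 0) ∧
      (∀ x, ‖x‖ ≤ R / 2 → φ x = 1) ∧
      (∀ x, ‖fderiv ℝ φ x‖ ^ 2 + |lap (fun y => (φ y) ^ 2) x| ≤ C * φ x ^ σ) :=
  stmt12_general n R σ hR hσ
end

section
/- Let f(u) = u·(log(1+u))^a with 1 < a < 2. Let V, φ ∈ C¹([−1,1]) be nonnegative even functions with V(0) > 0, φ(0) > 0, φ(1) = 0, with V′ ≤ 0 and φ′ ≤ 0 on [0,1/3], and with 0 ≤ V(x) ≤ V(1/3) and 0 ≤ φ(x) ≤ φ(1/3) for all x ∈ [1/3,1]. Assume in addition that φ ∈ C²([−1,1]) and that for some r ∈ (0,1) one has φ > 0 and V > 0 on [0,r] and φ″ ≥ 0 on [r,1]. Then there exists λ₀ > 0 such that for every λ ≥ λ₀, every T ∈ (0,∞], and every nonnegative classical solution u on [0,T)×[−1,1] of u_t = u_xx + V(x)f(u) with u(t,±1) = 0 and u(0,·) = λφ, one has ∂_t u(t,x) ≥ 0 for all (t,x) ∈ (0,T)×(−1,1). -/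
/-!
For large `lam`, `lam * φ` is a stationary subsolution: on `[0, r]` the functions `φ` and `V`
are bounded below, so the superlinear reaction `V f(lam φ) ≳ lam (log lam)^a` beats `lam |φ''|`;
on `[r, 1]` the term `lam φ''` is already nonnegative; evenness covers `[-1, 0]`.
By comparison, the solution starting at `lam φ` stays above `lam φ = u 0`, so each time
translate `u (· + h)` starts above `u`; since both solve the same Dirichlet problem, comparison
again gives `u (t + h) ≥ u t`. Comparison itself is the minimum principle applied to
`exp (-(K + 1) t) * (w₁ - w₂)`, where `K` bounds `V` times a Lipschitz constant of `f` on the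
range of the solutions.
-/

open Set Filter Topology Function

theorem IsLocalMin.deriv_deriv_nonneg {g : ℝ → ℝ} {x₀ : ℝ} (hc : ContinuousAt g x₀)
    (hmin : IsLocalMin g x₀) : 0 ≤ deriv (deriv g) x₀ := by
  by_contra! hneg
  -- by the second-derivative test `x₀` is also a local maximum, so `g` is locally constant
  have hmax := isLocalMax_of_deriv_deriv_neg hneg hmin.deriv_eq_zero hc
  have hconst : g =ᶠ[𝓝 x₀] fun _ => g x₀ := by
    filter_upwards [hmin, hmax] with y h₁ h₂ using le_antisymm h₂ h₁
  have := hconst.deriv.deriv_eq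
  simp only [deriv_const'] at this
  linarith

theorem HasDerivAt.nonpos_of_isMinOn_Icc {ψ : ℝ → ℝ} {d a t : ℝ} (hat : a < t)
    (hd : HasDerivAt ψ d t) (hmin : IsMinOn ψ (Icc a t) t) : d ≤ 0 := by
  have hcone : a - t ∈ posTangentConeAt (Icc a t) t :=
    mem_posTangentConeAt_of_segment_subset (by
      rw [add_sub_cancel, segment_eq_Icc']; simp [hat.le])
  have := hmin.localize.hasFDerivWithinAt_nonneg hd.hasDerivWithinAt.hasFDerivWithinAt hcone
  simp only [ContinuousLinearMap.toSpanSingleton_apply, smul_eq_mul] at this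
  nlinarith

theorem accPt_principal_of_mem_nhds {X : Type*} [TopologicalSpace X] {x : X} [(𝓝[≠] x).NeBot]
    {s : Set X} (hs : s ∈ 𝓝 x) : AccPt x (𝓟 s) := by
  rw [AccPt, inf_eq_left.2 (nhdsWithin_le_nhds.trans (le_principal_iff.2 hs))]
  infer_instance

section MinimumPrinciple

variable {a b T : ℝ} {w : ℝ → ℝ → ℝ}

theorem parabolic_minimum_principle_absorbing
    (hw : ContinuousOn (uncurry w) (Icc 0 T ×ˢ Icc a b))
    (h0 : ∀ x ∈ Icc a b, 0 ≤ w 0 x) (hbd : ∀ t ∈ Icc 0 T, 0 ≤ w t a ∧ 0 ≤ w t b)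
    (hpde : ∀ t ∈ Ioc 0 T, ∀ x ∈ Ioo a b, w t x < 0 →
      ∃ d, HasDerivAt (w · x) d t ∧ deriv (deriv (w t)) x - w t x ≤ d) :
    ∀ t ∈ Icc 0 T, ∀ x ∈ Icc a b, 0 ≤ w t x := by
  by_contra! ⟨t, ht, x, hx, hneg⟩
  obtain ⟨⟨t₀, x₀⟩, ⟨ht₀T, hx₀ab⟩, hmin⟩ :=
    (isCompact_Icc.prod isCompact_Icc).exists_isMinOn ⟨(t, x), ht, hx⟩ hw
  have hmin : ∀ s ∈ Icc 0 T, ∀ y ∈ Icc a b, w t₀ x₀ ≤ w s y := fun s hs y hy =>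
    hmin (show (s, y) ∈ _ from ⟨hs, hy⟩)
  have hneg₀ : w t₀ x₀ < 0 := (hmin t ht x hx).trans_lt hneg
  have ht₀ : t₀ ∈ Ioc 0 T := by
    refine ⟨ht₀T.1.lt_of_ne ?_, ht₀T.2⟩
    rintro rfl
    linarith [h0 x₀ hx₀ab]
  have hx₀ : x₀ ∈ Ioo a b := by
    refine ⟨hx₀ab.1.lt_of_ne ?_, hx₀ab.2.lt_of_ne ?_⟩ <;> rintro rfl <;>
      linarith [hbd t₀ ht₀T]
  obtain ⟨d, hd, hineq⟩ := hpde t₀ ht₀ x₀ hx₀ hneg₀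
  have hd_nonpos : d ≤ 0 := hd.nonpos_of_isMinOn_Icc ht₀.1 fun s hs =>
    hmin s ⟨hs.1, hs.2.trans ht₀.2⟩ x₀ hx₀ab
  have hslice : ContinuousOn (w t₀) (Icc a b) :=
    hw.comp (Continuous.prodMk_right t₀).continuousOn fun y hy => ⟨ht₀T, hy⟩
  have hxx : 0 ≤ deriv (deriv (w t₀)) x₀ :=
    IsLocalMin.deriv_deriv_nonneg (hslice.continuousAt (Icc_mem_nhds hx₀.1 hx₀.2)) <|
      IsMinOn.isLocalMin (fun y hy => hmin t₀ ht₀T y hy) (Icc_mem_nhds hx₀.1 hx₀.2)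
  linarith

theorem parabolic_minimum_principle (K : ℝ)
    (hw : ContinuousOn (uncurry w) (Icc 0 T ×ˢ Icc a b))
    (h0 : ∀ x ∈ Icc a b, 0 ≤ w 0 x) (hbd : ∀ t ∈ Icc 0 T, 0 ≤ w t a ∧ 0 ≤ w t b)
    (hpde : ∀ t ∈ Ioc 0 T, ∀ x ∈ Ioo a b, w t x < 0 →
      ∃ d, HasDerivAt (w · x) d t ∧ deriv (deriv (w t)) x + K * w t x ≤ d) :
    ∀ t ∈ Icc 0 T, ∀ x ∈ Icc a b, 0 ≤ w t x := by
  -- `exp (-(K + 1) t) * w` satisfies the inequality with `K = -1`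
  set e : ℝ → ℝ := fun t => Real.exp (-(K + 1) * t)
  have he : ∀ t, HasDerivAt e (-(K + 1) * e t) t := fun t => by
    simpa [e, mul_comm] using ((hasDerivAt_id t).const_mul (-(K + 1))).exp
  have key := parabolic_minimum_principle_absorbing (w := fun t x => e t * w t x)
    ((by fun_prop : Continuous fun q : ℝ × ℝ => e q.1).continuousOn.mul hw)
    (fun x hx => mul_nonneg (Real.exp_pos _).le (h0 x hx))
    (fun t ht => ⟨mul_nonneg (Real.exp_pos _).le (hbd t ht).1,
      mul_nonneg (Real.exp_pos _).le (hbd t ht).2⟩)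
    (fun t ht x hx hneg => by
      obtain ⟨d, hd, hineq⟩ := hpde t ht x hx
        (neg_of_mul_neg_right hneg (Real.exp_pos _).le)
      refine ⟨-(K + 1) * e t * w t x + e t * d, (he t).mul hd, ?_⟩
      rw [deriv_const_mul_field', deriv_const_mul_field']
      have := mul_le_mul_of_nonneg_left hineq (Real.exp_pos (-(K + 1) * t)).le
      linarith)
  exact fun t ht x hx => nonneg_of_mul_nonneg_right (key t ht x hx) (Real.exp_pos _)

end MinimumPrinciple

structure IsSupersolution (V g : ℝ → ℝ) (a b T : ℝ) (w : ℝ → ℝ → ℝ) : Prop where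
  continuousOn : ContinuousOn (uncurry w) (Icc 0 T ×ˢ Icc a b)
  exists_hasDerivAt : ∀ t ∈ Ioc 0 T, ∀ x ∈ Ioo a b, ∃ d, HasDerivAt (w · x) d t ∧
    ContDiffAt ℝ 2 (w t) x ∧ deriv (deriv (w t)) x + V x * g (w t x) ≤ d

structure IsSubsolution (V g : ℝ → ℝ) (a b T : ℝ) (w : ℝ → ℝ → ℝ) : Prop where
  continuousOn : ContinuousOn (uncurry w) (Icc 0 T ×ˢ Icc a b)
  exists_hasDerivAt : ∀ t ∈ Ioc 0 T, ∀ x ∈ Ioo a b, ∃ d, HasDerivAt (w · x) d t ∧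
    ContDiffAt ℝ 2 (w t) x ∧ d ≤ deriv (deriv (w t)) x + V x * g (w t x)

section Comparison

variable {V g : ℝ → ℝ} {a b T : ℝ}

theorem IsSupersolution.mono {w : ℝ → ℝ → ℝ} {T' : ℝ} (hw : IsSupersolution V g a b T w)
    (hT : T' ≤ T) : IsSupersolution V g a b T' w where
  continuousOn := hw.continuousOn.mono (prod_mono (Icc_subset_Icc_right hT) subset_rfl)
  exists_hasDerivAt t ht := hw.exists_hasDerivAt t ⟨ht.1, ht.2.trans hT⟩

theorem IsSubsolution.mono {w : ℝ → ℝ → ℝ} {T' : ℝ} (hw : IsSubsolution V g a b T w)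
    (hT : T' ≤ T) : IsSubsolution V g a b T' w where
  continuousOn := hw.continuousOn.mono (prod_mono (Icc_subset_Icc_right hT) subset_rfl)
  exists_hasDerivAt t ht := hw.exists_hasDerivAt t ⟨ht.1, ht.2.trans hT⟩

theorem IsSupersolution.comp_add_const {w : ℝ → ℝ → ℝ} {h : ℝ} (hh : 0 ≤ h)
    (hw : IsSupersolution V g a b (T + h) w) :
    IsSupersolution V g a b T (fun t => w (t + h)) where
  continuousOn := hw.continuousOn.comp (f := fun q : ℝ × ℝ => (q.1 + h, q.2)) (by fun_prop)
    fun q hq => ⟨⟨by linarith [hq.1.1], by linarith [hq.1.2]⟩, hq.2⟩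
  exists_hasDerivAt t ht x hx := by
    obtain ⟨d, hd, hx2, hineq⟩ :=
      hw.exists_hasDerivAt (t + h) ⟨by linarith [ht.1], by linarith [ht.2]⟩ x hx
    exact ⟨d, hd.comp_add_const t h, hx2, hineq⟩

theorem isSupersolution_and_isSubsolution_of_deriv_eq {w : ℝ → ℝ → ℝ}
    (hw : ContinuousOn (uncurry w) (Icc 0 T ×ˢ Icc a b))
    (hpde : ∀ t ∈ Ioc 0 T, ∀ x ∈ Ioo a b, DifferentiableAt ℝ (w · x) t ∧
      ContDiffAt ℝ 2 (w t) x ∧ deriv (w · x) t = deriv (deriv (w t)) x + V x * g (w t x)) :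
    IsSupersolution V g a b T w ∧ IsSubsolution V g a b T w := by
  refine ⟨⟨hw, fun t ht x hx => ?_⟩, ⟨hw, fun t ht x hx => ?_⟩⟩ <;>
  obtain ⟨hd, hx2, heq⟩ := hpde t ht x hx
  exacts [⟨_, hd.hasDerivAt, hx2, heq.ge⟩, ⟨_, hd.hasDerivAt, hx2, heq.le⟩]

theorem isSubsolution_const {v : ℝ → ℝ} (hv : ContinuousOn v (Icc a b))
    (hv2 : ∀ x ∈ Ioo a b, ContDiffAt ℝ 2 v x)
    (hsub : ∀ x ∈ Ioo a b, 0 ≤ deriv (deriv v) x + V x * g (v x)) :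
    IsSubsolution V g a b T (fun _ => v) where
  continuousOn := hv.comp continuous_snd.continuousOn fun _ hq => hq.2
  exists_hasDerivAt _ _ x hx := ⟨0, hasDerivAt_const _ _, hv2 x hx, hsub x hx⟩

theorem deriv_deriv_sub {f₁ f₂ : ℝ → ℝ} {x : ℝ} (h₁ : ContDiffAt ℝ 2 f₁ x)
    (h₂ : ContDiffAt ℝ 2 f₂ x) :
    deriv (deriv fun y => f₁ y - f₂ y) x = deriv (deriv f₁) x - deriv (deriv f₂) x := by
  simpa [iteratedDeriv_succ, iteratedDeriv_one] using iteratedDeriv_fun_sub (n := 2) h₁ h₂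

theorem IsSubsolution.le_of_isSupersolution {S : Set ℝ} {Vmax : ℝ}
    {w₁ w₂ : ℝ → ℝ → ℝ}
    (h₂ : IsSubsolution V g a b T w₂) (h₁ : IsSupersolution V g a b T w₁)
    (hV : ∀ x ∈ Ioo a b, 0 ≤ V x ∧ V x ≤ Vmax) (hg : LocallyLipschitzOn S g)
    (hS₁ : ∀ t ∈ Icc 0 T, ∀ x ∈ Icc a b, w₁ t x ∈ S)
    (hS₂ : ∀ t ∈ Icc 0 T, ∀ x ∈ Icc a b, w₂ t x ∈ S)
    (h0 : ∀ x ∈ Icc a b, w₂ 0 x ≤ w₁ 0 x)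
    (hbd : ∀ t ∈ Icc 0 T, w₂ t a ≤ w₁ t a ∧ w₂ t b ≤ w₁ t b) :
    ∀ t ∈ Icc 0 T, ∀ x ∈ Icc a b, w₂ t x ≤ w₁ t x := by
  set D := Icc 0 T ×ˢ Icc a b
  have hD : IsCompact D := isCompact_Icc.prod isCompact_Icc
  obtain ⟨L, hL⟩ := (hg.mono (union_subset (image_subset_iff.2 fun q hq => hS₁ _ hq.1 _ hq.2)
    (image_subset_iff.2 fun q hq => hS₂ _ hq.1 _ hq.2))).exists_lipschitzOnWith_of_compact <|
    (hD.image_of_continuousOn h₁.continuousOn).union (hD.image_of_continuousOn h₂.continuousOn)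
  have key := parabolic_minimum_principle (Vmax * L) (w := fun t x => w₁ t x - w₂ t x)
    (h₁.continuousOn.sub h₂.continuousOn) (fun x hx => sub_nonneg.2 (h0 x hx))
    (fun t ht => ⟨sub_nonneg.2 (hbd t ht).1, sub_nonneg.2 (hbd t ht).2⟩) ?_
  · exact fun t ht x hx => sub_nonneg.1 (key t ht x hx)
  intro t ht x hx hneg
  obtain ⟨d₁, hd₁, h₁x, hineq₁⟩ := h₁.exists_hasDerivAt t ht x hx
  obtain ⟨d₂, hd₂, h₂x, hineq₂⟩ := h₂.exists_hasDerivAt t ht x hx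
  refine ⟨d₁ - d₂, hd₁.sub hd₂, ?_⟩
  rw [deriv_deriv_sub h₁x h₂x]
  have hmem : ∀ w : ℝ → ℝ → ℝ, w t x ∈ uncurry w '' D := fun w =>
    ⟨(t, x), ⟨Ioc_subset_Icc_self ht, Ioo_subset_Icc_self hx⟩, rfl⟩
  have hlip : |g (w₁ t x) - g (w₂ t x)| ≤ L * |w₁ t x - w₂ t x| := by
    simpa [Real.dist_eq] using hL.dist_le_mul _ (Or.inl (hmem w₁)) _ (Or.inr (hmem w₂))
  have hreact : Vmax * L * (w₁ t x - w₂ t x) ≤ V x * (g (w₁ t x) - g (w₂ t x)) := by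
    rw [abs_of_neg (a := w₁ t x - w₂ t x) hneg] at hlip
    have hL0 : (0 : ℝ) ≤ L := L.2
    nlinarith [abs_le.1 hlip, hV x hx]
  nlinarith

theorem IsSupersolution.monotoneOn_of_isSubsolution_const {S : Set ℝ} {Vmax : ℝ}
    {u : ℝ → ℝ → ℝ} {v : ℝ → ℝ}
    (hsup : IsSupersolution V g a b T u) (hsub : IsSubsolution V g a b T u)
    (hv : IsSubsolution V g a b T (fun _ => v))
    (hV : ∀ x ∈ Ioo a b, 0 ≤ V x ∧ V x ≤ Vmax) (hg : LocallyLipschitzOn S g)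
    (huS : ∀ t ∈ Icc 0 T, ∀ x ∈ Icc a b, u t x ∈ S) (hvS : ∀ x ∈ Icc a b, v x ∈ S)
    (hu0 : ∀ x ∈ Icc a b, u 0 x = v x) (hbd : ∀ t ∈ Icc 0 T, u t a = v a ∧ u t b = v b) :
    ∀ x ∈ Icc a b, MonotoneOn (u · x) (Icc 0 T) := by
  have hlower : ∀ t ∈ Icc 0 T, ∀ x ∈ Icc a b, v x ≤ u t x :=
    hv.le_of_isSupersolution hsup hV hg huS (fun _ _ x hx => hvS x hx)
      (fun x hx => (hu0 x hx).ge) (fun t ht => ⟨(hbd t ht).1.ge, (hbd t ht).2.ge⟩)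
  intro x hx t₁ ht₁ t₂ ht₂ h12
  -- compare `u` with its time translate by `t₂ - t₁`, which starts above `v = u 0`
  have hshift : IsSupersolution V g a b t₁ (fun t => u (t + (t₂ - t₁))) :=
    IsSupersolution.comp_add_const (sub_nonneg.2 h12)
      (by rw [add_sub_cancel]; exact hsup.mono ht₂.2)
  have hshiftS : ∀ t ∈ Icc 0 t₁, t + (t₂ - t₁) ∈ Icc 0 T := fun t ht =>
    ⟨by linarith [ht.1], by linarith [ht.2, ht₂.2]⟩
  have hS : ∀ t ∈ Icc 0 t₁, t ∈ Icc 0 T := fun t ht => ⟨ht.1, ht.2.trans ht₁.2⟩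
  have := (hsub.mono ht₁.2).le_of_isSupersolution hshift hV hg
    (fun t ht y hy => huS _ (hshiftS t ht) y hy) (fun t ht y hy => huS t (hS t ht) y hy)
    (fun y hy => by rw [hu0 y hy]; exact hlower _ (hshiftS 0 ⟨le_rfl, ht₁.1⟩) y hy)
    (fun t ht => by simp only [(hbd _ (hS t ht)).1, (hbd _ (hS t ht)).2, (hbd _ (hshiftS t ht)).1,
      (hbd _ (hshiftS t ht)).2, le_refl, and_self])
    t₁ ⟨ht₁.1, le_rfl⟩ x hx
  simpa using this

end Comparison

noncomputable def logNonlin (a u : ℝ) : ℝ := u * Real.log (1 + u) ^ a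

theorem logNonlin_nonneg {a u : ℝ} (hu : 0 ≤ u) : 0 ≤ logNonlin a u :=
  mul_nonneg hu (Real.rpow_nonneg (Real.log_nonneg (by linarith)) a)

theorem locallyLipschitzOn_logNonlin {a : ℝ} (ha : 1 ≤ a) :
    LocallyLipschitzOn (Ici 0) (logNonlin a) := by
  have hlog : ContDiffOn ℝ 1 (fun u : ℝ => Real.log (1 + u)) (Ici 0) :=
    (contDiffOn_const.add contDiffOn_id).log fun u hu => by simp at hu; positivity
  exact (contDiffOn_id.mul ((Real.contDiff_rpow_const_of_le (n := 1) (by simpa)).comp_contDiffOn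
    hlog)).locallyLipschitzOn (convex_Ici 0)

theorem tendsto_log_one_add_mul_rpow_atTop {a δ : ℝ} (ha : 0 < a) (hδ : 0 < δ) :
    Tendsto (fun lam => Real.log (1 + lam * δ) ^ a) atTop atTop :=
  (tendsto_rpow_atTop ha).comp <| Real.tendsto_log_atTop.comp <|
    tendsto_atTop_add_const_left _ _ (tendsto_id.atTop_mul_const hδ)

theorem IsCompact.eventually_forall_nonneg_mul_add_mul_logNonlin {K : Set ℝ} (hK : IsCompact K)
    {a : ℝ} (ha : 0 < a) {V φ ψ : ℝ → ℝ} (hV : ContinuousOn V K) (hφ : ContinuousOn φ K)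
    (hψ : ContinuousOn ψ K) (hVpos : ∀ x ∈ K, 0 < V x) (hφpos : ∀ x ∈ K, 0 < φ x) :
    ∀ᶠ lam in atTop, ∀ x ∈ K, 0 ≤ lam * ψ x + V x * logNonlin a (lam * φ x) := by
  obtain ⟨M, hM⟩ := hK.exists_bound_of_continuousOn hψ
  obtain ⟨m, hm, hVφ⟩ :=
    hK.exists_forall_le' (hV.mul hφ) fun x hx => mul_pos (hVpos x hx) (hφpos x hx)
  obtain ⟨δ, hδ, hφδ⟩ := hK.exists_forall_le' hφ hφpos
  filter_upwards [(tendsto_log_one_add_mul_rpow_atTop ha hδ).eventually_ge_atTop (M / m),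
    eventually_ge_atTop 0] with lam hlog hlam x hx
  have hψx : -M ≤ ψ x := neg_le_of_abs_le (hM x hx)
  have hlogx : Real.log (1 + lam * δ) ^ a ≤ Real.log (1 + lam * φ x) ^ a := by
    gcongr
    · exact Real.log_nonneg (by nlinarith)
    · exact hφδ x hx
  have hMm : M ≤ m * Real.log (1 + lam * δ) ^ a := by rwa [div_le_iff₀' hm] at hlog
  have hmVφ : m * Real.log (1 + lam * δ) ^ a ≤ V x * φ x * Real.log (1 + lam * δ) ^ a :=
    mul_le_mul_of_nonneg_right (hVφ x hx)
      (Real.rpow_nonneg (Real.log_nonneg (by nlinarith)) a)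
  calc 0 ≤ lam * (-M + V x * φ x * Real.log (1 + lam * δ) ^ a) :=
        mul_nonneg hlam (by linarith)
    _ ≤ lam * ψ x + V x * logNonlin a (lam * φ x) := by
        unfold logNonlin
        nlinarith [mul_le_mul_of_nonneg_left hlogx
          (mul_nonneg hlam (mul_nonneg (hVpos x hx).le (hφpos x hx).le))]

theorem eventually_forall_nonneg_mul_add_mul_logNonlin_of_even {a r R : ℝ} (ha : 0 < a)
    {V φ ψ : ℝ → ℝ} (hV : ContinuousOn V (Icc 0 r)) (hφ : ContinuousOn φ (Icc 0 r))
    (hψ : ContinuousOn ψ (Icc 0 r)) (hVpos : ∀ x ∈ Icc 0 r, 0 < V x)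
    (hφpos : ∀ x ∈ Icc 0 r, 0 < φ x) (hV_nonneg : ∀ x ∈ Icc (-R) R, 0 ≤ V x)
    (hφ_nonneg : ∀ x ∈ Icc (-R) R, 0 ≤ φ x) (hψ_nonneg : ∀ x ∈ Icc r R, 0 ≤ ψ x)
    (hV_even : ∀ x ∈ Icc (-R) R, V (-x) = V x) (hφ_even : ∀ x ∈ Icc (-R) R, φ (-x) = φ x)
    (hψ_even : ∀ x ∈ Icc (-R) R, ψ (-x) = ψ x) :
    ∀ᶠ lam in atTop, ∀ x ∈ Icc (-R) R, 0 ≤ lam * ψ x + V x * logNonlin a (lam * φ x) := by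
  filter_upwards [isCompact_Icc.eventually_forall_nonneg_mul_add_mul_logNonlin ha hV hφ hψ hVpos
    hφpos, eventually_ge_atTop 0] with lam hnear hlam
  have hhalf : ∀ y ∈ Icc 0 R, 0 ≤ lam * ψ y + V y * logNonlin a (lam * φ y) := by
    intro y hy
    have hyR : y ∈ Icc (-R) R := ⟨by linarith [hy.1, hy.2], hy.2⟩
    rcases le_total y r with hyr | hry
    · exact hnear y ⟨hy.1, hyr⟩
    · exact add_nonneg (mul_nonneg hlam (hψ_nonneg y ⟨hry, hy.2⟩))
        (mul_nonneg (hV_nonneg y hyR) (logNonlin_nonneg (mul_nonneg hlam (hφ_nonneg y hyR))))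
  intro x hx
  rcases le_total 0 x with hx0 | hx0
  · exact hhalf x ⟨hx0, hx.2⟩
  · simpa only [hV_even x hx, hφ_even x hx, hψ_even x hx] using
      hhalf (-x) ⟨neg_nonneg.2 hx0, by linarith [hx.1]⟩

theorem iteratedDerivWithin_neg_of_even {n : ℕ} {s : Set ℝ} {φ : ℝ → ℝ} (hs : -s = s)
    (hφ : ∀ x ∈ s, φ (-x) = φ x) {x : ℝ} (hx : x ∈ s) :
    iteratedDerivWithin n φ s (-x) = (-1) ^ n * iteratedDerivWithin n φ s x := by
  have hx' : -x ∈ s := by rw [← hs]; simpa using hx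
  rw [iteratedDerivWithin_congr (fun y hy => (hφ y hy).symm) hx', iteratedDerivWithin_comp_neg,
    hs, neg_neg, smul_eq_mul]

theorem eventually_forall_nonneg_deriv_deriv_add_mul_logNonlin {a r : ℝ} (ha : 0 < a)
    (hr : r ≤ 1) {V φ : ℝ → ℝ} (hV : ContinuousOn V (Icc (-1) 1))
    (hφ : ContDiffOn ℝ 2 φ (Icc (-1) 1)) (hVpos : ∀ x ∈ Icc 0 r, 0 < V x)
    (hφpos : ∀ x ∈ Icc 0 r, 0 < φ x) (hV_nonneg : ∀ x ∈ Icc (-1) 1, 0 ≤ V x)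
    (hφ_nonneg : ∀ x ∈ Icc (-1) 1, 0 ≤ φ x) (hV_even : ∀ x ∈ Icc (-1) 1, V (-x) = V x)
    (hφ_even : ∀ x ∈ Icc (-1) 1, φ (-x) = φ x)
    (hφ'' : ∀ x ∈ Icc r 1, 0 ≤ iteratedDerivWithin 2 φ (Icc (-1) 1) x) :
    ∀ᶠ lam in atTop, ∀ x ∈ Ioo (-1) 1,
      0 ≤ deriv (deriv fun y => lam * φ y) x + V x * logNonlin a (lam * φ x) := by
  have hr' : Icc 0 r ⊆ Icc (-1) 1 := Icc_subset_Icc (by norm_num) hr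
  have hψ : ContinuousOn (iteratedDerivWithin 2 φ (Icc (-1) 1)) (Icc (-1) 1) :=
    hφ.continuousOn_iteratedDerivWithin le_rfl (uniqueDiffOn_Icc (by norm_num))
  have hψ_even : ∀ x ∈ Icc (-1) 1, iteratedDerivWithin 2 φ (Icc (-1) 1) (-x) =
      iteratedDerivWithin 2 φ (Icc (-1) 1) x := fun x hx => by
    simpa using iteratedDerivWithin_neg_of_even (n := 2) (by simp) hφ_even hx
  filter_upwards [eventually_forall_nonneg_mul_add_mul_logNonlin_of_even ha (hV.mono hr')
    (hφ.continuousOn.mono hr') (hψ.mono hr') hVpos hφpos hV_nonneg hφ_nonneg hφ'' hV_even hφ_even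
    hψ_even] with lam hlam x hx
  have hψx : iteratedDerivWithin 2 φ (Icc (-1) 1) x = deriv (deriv φ) x := by
    rw [iteratedDerivWithin_eq_iteratedDeriv (uniqueDiffOn_Icc (by norm_num))
      (hφ.contDiffAt (Icc_mem_nhds hx.1 hx.2)) (Ioo_subset_Icc_self hx), iteratedDeriv_succ,
      iteratedDeriv_one]
  rw [deriv_const_mul_field', deriv_const_mul_field']
  beta_reduce
  rw [← hψx]
  exact hlam x (Ioo_subset_Icc_self hx)

theorem stmt17_general
    (a : ℝ) (ha1 : 1 < a)
    (V φ : ℝ → ℝ)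
    (hV_C1 : ContDiffOn ℝ 1 V (Icc (-1) 1))
    (hV_nonneg : ∀ x ∈ Icc (-1:ℝ) 1, 0 ≤ V x) (hφ_nonneg : ∀ x ∈ Icc (-1:ℝ) 1, 0 ≤ φ x)
    (hV_even : ∀ x ∈ Icc (-1:ℝ) 1, V (-x) = V x) (hφ_even : ∀ x ∈ Icc (-1:ℝ) 1, φ (-x) = φ x)
    (hφ1 : φ 1 = 0)
    (hφ_C2 : ContDiffOn ℝ 2 φ (Icc (-1) 1))
    (r : ℝ) (hr : r ∈ Ioo (0:ℝ) 1)
    (hφpos : ∀ x ∈ Icc (0:ℝ) r, 0 < φ x) (hVpos : ∀ x ∈ Icc (0:ℝ) r, 0 < V x)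
    (hφ'' : ∀ x ∈ Icc r (1:ℝ), 0 ≤ iteratedDerivWithin 2 φ (Icc (-1) 1) x)
    :
    ∃ lam₀ > 0, ∀ lam ≥ lam₀, ∀ T : EReal, 0 < T →
      ∀ u : ℝ → ℝ → ℝ,
        ContinuousOn (fun q : ℝ × ℝ => u q.1 q.2)
          {q : ℝ × ℝ | 0 ≤ q.1 ∧ (q.1 : EReal) < T ∧ q.2 ∈ Icc (-1:ℝ) 1} →
        (∀ t : ℝ, 0 ≤ t → (t : EReal) < T → ∀ x ∈ Icc (-1:ℝ) 1, 0 ≤ u t x) →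
        (∀ t : ℝ, 0 < t → (t : EReal) < T → ∀ x ∈ Ioo (-1:ℝ) 1,
          DifferentiableAt ℝ (fun s => u s x) t ∧ ContDiffAt ℝ 2 (u t) x ∧
          deriv (fun s => u s x) t = deriv (deriv (u t)) x + V x * (u t x * Real.log (1 + u t x) ^ a)) →
        (∀ t : ℝ, 0 < t → (t : EReal) < T → u t (-1) = 0 ∧ u t 1 = 0) →
        (∀ x ∈ Icc (-1:ℝ) 1, u 0 x = lam * φ x) →
        ∀ t : ℝ, 0 < t → (t : EReal) < T → ∀ x ∈ Ioo (-1:ℝ) 1,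
          0 ≤ deriv (fun s => u s x) t := by
  obtain ⟨lam₀, hlam₀⟩ := eventually_atTop.1 <|
    (eventually_forall_nonneg_deriv_deriv_add_mul_logNonlin (a := a) (by linarith) hr.2.le
      hV_C1.continuousOn hφ_C2 hVpos hφpos hV_nonneg hφ_nonneg hV_even hφ_even hφ'').and
      (eventually_gt_atTop 0)
  refine ⟨lam₀, (hlam₀ lam₀ le_rfl).2,
    fun lam hlam T _ u hcont hnn hpde hbc hinit t ht htT x hx => ?_⟩
  obtain ⟨τ, htτ, hτT⟩ := EReal.lt_iff_exists_real_btwn.1 htT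
  have hτ : ∀ s ∈ Icc 0 τ, (s : EReal) < T := fun s hs =>
    (EReal.coe_le_coe_iff.2 hs.2).trans_lt hτT
  have hφm1 : φ (-1) = 0 := by rw [hφ_even 1 (by norm_num), hφ1]
  have hu_bd : ∀ s ∈ Icc 0 τ, u s (-1) = lam * φ (-1) ∧ u s 1 = lam * φ 1 := by
    intro s hs
    rcases hs.1.eq_or_lt with rfl | hs0
    · exact ⟨hinit _ (by norm_num), hinit _ (by norm_num)⟩
    · simp [hφ1, hφm1, hbc s hs0 (hτ s hs)]
  obtain ⟨hsup, hsub⟩ := isSupersolution_and_isSubsolution_of_deriv_eq (g := logNonlin a)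
    (hcont.mono fun q hq => ⟨hq.1.1, hτ _ hq.1, hq.2⟩)
    fun s hs y hy => hpde s hs.1 (hτ s (Ioc_subset_Icc_self hs)) y hy
  obtain ⟨Vmax, hVmax⟩ := isCompact_Icc.bddAbove_image hV_C1.continuousOn
  have hstat : IsSubsolution V (logNonlin a) (-1) 1 τ fun _ y => lam * φ y :=
    isSubsolution_const (continuousOn_const.mul hφ_C2.continuousOn)
      (fun y hy => contDiffAt_const.mul (hφ_C2.contDiffAt (Icc_mem_nhds hy.1 hy.2)))
      (hlam₀ lam hlam).1
  have hmono := hsup.monotoneOn_of_isSubsolution_const hsub hstat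
    (fun y hy => ⟨hV_nonneg y (Ioo_subset_Icc_self hy), hVmax ⟨y, Ioo_subset_Icc_self hy, rfl⟩⟩)
    (locallyLipschitzOn_logNonlin ha1.le) (fun s hs y hy => hnn s hs.1 (hτ s hs) y hy)
    (fun y hy => mul_nonneg (hlam₀ lam hlam).2.le (hφ_nonneg y hy)) hinit hu_bd
    x (Ioo_subset_Icc_self hx)
  exact (hpde t ht htT x hx).1.hasDerivAt.hasDerivWithinAt.nonneg_of_monotoneOn
    (accPt_principal_of_mem_nhds (Icc_mem_nhds ht (EReal.coe_lt_coe_iff.1 htτ))) hmono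

theorem stmt17
    (a : ℝ) (ha1 : 1 < a) (ha2 : a < 2)
    (V φ : ℝ → ℝ)
    (hV_C1 : ContDiffOn ℝ 1 V (Icc (-1) 1)) (hφ_C1 : ContDiffOn ℝ 1 φ (Icc (-1) 1))
    (hV_nonneg : ∀ x ∈ Icc (-1:ℝ) 1, 0 ≤ V x) (hφ_nonneg : ∀ x ∈ Icc (-1:ℝ) 1, 0 ≤ φ x)
    (hV_even : ∀ x ∈ Icc (-1:ℝ) 1, V (-x) = V x) (hφ_even : ∀ x ∈ Icc (-1:ℝ) 1, φ (-x) = φ x)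
    (hV0 : 0 < V 0) (hφ0 : 0 < φ 0) (hφ1 : φ 1 = 0)
    (hV' : ∀ x ∈ Icc (0:ℝ) (1/3), derivWithin V (Icc (-1) 1) x ≤ 0)
    (hφ' : ∀ x ∈ Icc (0:ℝ) (1/3), derivWithin φ (Icc (-1) 1) x ≤ 0)
    (hVbd : ∀ x ∈ Icc (1/3:ℝ) 1, V x ≤ V (1/3))
    (hφbd : ∀ x ∈ Icc (1/3:ℝ) 1, φ x ≤ φ (1/3))
    (hφ_C2 : ContDiffOn ℝ 2 φ (Icc (-1) 1))
    (r : ℝ) (hr : r ∈ Ioo (0:ℝ) 1)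
    (hφpos : ∀ x ∈ Icc (0:ℝ) r, 0 < φ x) (hVpos : ∀ x ∈ Icc (0:ℝ) r, 0 < V x)
    (hφ'' : ∀ x ∈ Icc r (1:ℝ), 0 ≤ iteratedDerivWithin 2 φ (Icc (-1) 1) x)
    :
    ∃ lam₀ > 0, ∀ lam ≥ lam₀, ∀ T : EReal, 0 < T →
      ∀ u : ℝ → ℝ → ℝ,
        ContinuousOn (fun q : ℝ × ℝ => u q.1 q.2)
          {q : ℝ × ℝ | 0 ≤ q.1 ∧ (q.1 : EReal) < T ∧ q.2 ∈ Icc (-1:ℝ) 1} →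
        (∀ t : ℝ, 0 ≤ t → (t : EReal) < T → ∀ x ∈ Icc (-1:ℝ) 1, 0 ≤ u t x) →
        (∀ t : ℝ, 0 < t → (t : EReal) < T → ∀ x ∈ Ioo (-1:ℝ) 1,
          DifferentiableAt ℝ (fun s => u s x) t ∧ ContDiffAt ℝ 2 (u t) x ∧
          deriv (fun s => u s x) t = deriv (deriv (u t)) x + V x * (u t x * Real.log (1 + u t x) ^ a)) →
        (∀ t : ℝ, 0 < t → (t : EReal) < T → u t (-1) = 0 ∧ u t 1 = 0) →
        (∀ x ∈ Icc (-1:ℝ) 1, u 0 x = lam * φ x) →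
        ∀ t : ℝ, 0 < t → (t : EReal) < T → ∀ x ∈ Ioo (-1:ℝ) 1,
          0 ≤ deriv (fun s => u s x) t :=
  stmt17_general a ha1 V φ hV_C1 hV_nonneg hφ_nonneg hV_even hφ_even hφ1 hφ_C2 r hr hφpos hVpos hφ''
end

section
/- Let f : [0,∞) → [0,∞) be of class C¹. Let V, u₀ ∈ C¹([−1,1]) be nonnegative even functions with V(0) > 0, u₀(0) > 0 and u₀(1) = 0. Let L ∈ [1/3,1) and assume V′ ≤ 0 and u₀′ ≤ 0 on [0,L], and 0 ≤ V(x) ≤ V(L) and 0 ≤ u₀(x) ≤ u₀(L) for all x ∈ [L,1]. Then for any τ > 0 and any nonnegative classical solution u on [0,τ]×[−1,1] of u_t = u_xx + V(x)f(u) on (0,τ]×(−1,1) with u(t,−1) = u(t,1) = 0 for t ∈ (0,τ] and u(0,·) = u₀, the following hold: (a) ∂_x u(t,x) ≤ 0 for all t ∈ (0,τ] and x ∈ [0,L]; (b) max_{x∈[−1,1]} u(t,x) = u(t,0) for all t ∈ (0,τ). -/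
/-!
Moving planes. For a plane `x = c`, the difference `w(t,x) = u(t,x) - u(t,2c-x)` satisfies
`w_t ≤ w_xx + K w` wherever `w > 0`, because `f` is locally Lipschitz, `V ≥ 0` and
`V(x) ≤ V(2c-x)`; the parabolic maximum principle, applied to `e^{-(K+1)t} w`, then gives `w ≤ 0`
as soon as `w ≤ 0` at `t = 0` and at the ends of `[c, b]`. The shape of `V` and `u₀` provides these
comparisons for `c = 0` (so `u` stays even), for `c = L` on `[L, 1]` (here `L ≥ 1/3` keeps the
mirror image `2L - x` within distance `L` of the centre), and then for every `c ∈ [0, L]` on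
`[c, min 1 (L + c)]`. The inequalities `u(t, c+h) ≤ u(t, c-h)` give `∂ₓu ≤ 0` on `[0, L]`, and
reflecting `|x|` onto `0` shows that the maximum sits at `x = 0`.
-/

open Set Filter Topology NNReal

theorem IsLocalMax.deriv_deriv_nonpos {φ : ℝ → ℝ} {x : ℝ} (h : IsLocalMax φ x)
    (hc : ContinuousAt φ x) : deriv (deriv φ) x ≤ 0 := by
  by_contra! hpos
  -- the second-derivative test would make `x` a local minimum too, so `φ` is locally constant
  have hmin : IsLocalMin φ x := isLocalMin_of_deriv_deriv_pos hpos h.deriv_eq_zero hc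
  have hconst : φ =ᶠ[𝓝 x] fun _ => φ x := (h.and hmin).mono fun y hy => le_antisymm hy.1 hy.2
  have : deriv (deriv φ) x = 0 := by
    rw [hconst.deriv.deriv_eq]; simp
  linarith

theorem IsLocalMaxOn.sub_mul_nonpos_of_hasDerivWithinAt {ψ : ℝ → ℝ} {s : Set ℝ} {a b d : ℝ}
    (h : IsLocalMaxOn ψ s a) (hd : HasDerivWithinAt ψ d s a) (hab : segment ℝ a b ⊆ s) :
    (b - a) * d ≤ 0 := by
  simpa using h.hasFDerivWithinAt_nonpos hd.hasFDerivWithinAt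
    (sub_mem_posTangentConeAt_of_segment_subset hab)

theorem deriv_nonpos_of_le_reflect {φ : ℝ → ℝ} {x : ℝ} (hφ : DifferentiableAt ℝ φ x)
    (hle : ∀ᶠ h in 𝓝[≥] 0, φ (x + h) ≤ φ (x - h)) : deriv φ x ≤ 0 := by
  have hd : HasDerivAt (fun h => φ (x + h) - φ (x - h)) (deriv φ x - -deriv φ x) 0 := by
    have h1 : HasDerivAt φ (deriv φ x) (x + 0) := by simpa using hφ.hasDerivAt
    have h2 : HasDerivAt φ (deriv φ x) (x - 0) := by simpa using hφ.hasDerivAt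
    exact h1.comp_const_add.sub h2.comp_const_sub
  have hmax : IsLocalMaxOn (fun h => φ (x + h) - φ (x - h)) (Ici 0) 0 :=
    hle.mono fun h hh => by simpa using hh
  have hseg : segment ℝ (0 : ℝ) 1 ⊆ Ici 0 := by
    rw [segment_eq_Icc zero_le_one]; exact Icc_subset_Ici_self
  have := hmax.sub_mul_nonpos_of_hasDerivWithinAt hd.hasDerivWithinAt hseg
  linarith

theorem deriv_deriv_sub_comp_const_sub {φ : ℝ → ℝ} {c x : ℝ} (hx : ContDiffAt ℝ 2 φ x)
    (hcx : ContDiffAt ℝ 2 φ (c - x)) :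
    deriv (deriv fun y => φ y - φ (c - y)) x = deriv (deriv φ) x - deriv (deriv φ) (c - x) := by
  have hiter : ∀ ψ : ℝ → ℝ, deriv (deriv ψ) = iteratedDeriv 2 ψ := fun ψ => by
    simp [iteratedDeriv_succ]
  have hcx' : ContDiffAt ℝ 2 (fun y => φ (c - y)) x :=
    hcx.comp x (contDiffAt_const.sub contDiffAt_id)
  rw [hiter, hiter, iteratedDeriv_fun_sub hx hcx', iteratedDeriv_comp_const_sub]
  simp

theorem deriv_deriv_comp_neg (φ : ℝ → ℝ) (x : ℝ) :
    deriv (deriv fun y => φ (-y)) x = deriv (deriv φ) (-x) := by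
  have hiter : ∀ ψ : ℝ → ℝ, deriv (deriv ψ) = iteratedDeriv 2 ψ := fun ψ => by
    simp [iteratedDeriv_succ]
  rw [hiter, hiter, iteratedDeriv_comp_neg]
  simp

theorem nonpos_of_strict_subsolution {τ a b : ℝ} {g : ℝ → ℝ → ℝ}
    (hg : ContinuousOn (fun q : ℝ × ℝ => g q.1 q.2) (Icc 0 τ ×ˢ Icc a b))
    (hsub : ∀ t ∈ Ioc 0 τ, ∀ x ∈ Ioo a b, 0 < g t x →
      ∃ d, HasDerivWithinAt (fun s => g s x) d (Ioc 0 τ) t ∧ d < deriv (deriv (g t)) x)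
    (hbdry : ∀ t ∈ Icc 0 τ, g t a ≤ 0 ∧ g t b ≤ 0) (hinit : ∀ x ∈ Icc a b, g 0 x ≤ 0) :
    ∀ t ∈ Icc 0 τ, ∀ x ∈ Icc a b, g t x ≤ 0 := by
  intro t ht x hx
  obtain ⟨⟨t₀, x₀⟩, ⟨ht₀, hx₀⟩, hmax⟩ :=
    (isCompact_Icc.prod isCompact_Icc).exists_isMaxOn ⟨(t, x), ht, hx⟩ hg
  have hmax' : ∀ s ∈ Icc 0 τ, ∀ y ∈ Icc a b, g s y ≤ g t₀ x₀ :=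
    fun s hs y hy => isMaxOn_iff.mp hmax (s, y) ⟨hs, hy⟩
  refine (hmax' t ht x hx).trans (not_lt.1 fun hpos => ?_)
  have ht₀' : t₀ ∈ Ioc 0 τ := ⟨ht₀.1.lt_of_ne (by rintro rfl; linarith [hinit x₀ hx₀]), ht₀.2⟩
  have hx₀' : x₀ ∈ Ioo a b :=
    ⟨hx₀.1.lt_of_ne (by rintro rfl; linarith [(hbdry t₀ ht₀).1]),
      hx₀.2.lt_of_ne' (by rintro rfl; linarith [(hbdry t₀ ht₀).2])⟩
  obtain ⟨d, hd, hlt⟩ := hsub t₀ ht₀' x₀ hx₀' hpos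
  have hspace : deriv (deriv (g t₀)) x₀ ≤ 0 := by
    have hnhds : Icc a b ∈ 𝓝 x₀ := Icc_mem_nhds hx₀'.1 hx₀'.2
    have hslice : ContinuousOn (g t₀) (Icc a b) :=
      hg.comp (Continuous.continuousOn (f := fun y : ℝ => (t₀, y)) (by fun_prop))
        fun y hy => ⟨ht₀, hy⟩
    exact IsLocalMax.deriv_deriv_nonpos (mem_of_superset hnhds fun y hy => hmax' t₀ ht₀ y hy)
      (hslice.continuousAt hnhds)
  have htime : 0 ≤ d := by
    have hloc : IsLocalMaxOn (fun s => g s x₀) (Ioc 0 τ) t₀ :=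
      mem_of_superset self_mem_nhdsWithin fun s hs => hmax' s (Ioc_subset_Icc_self hs) x₀ hx₀
    have hseg : segment ℝ t₀ (t₀ / 2) ⊆ Ioc 0 τ := by
      rw [segment_symm, segment_eq_Icc (by linarith [ht₀'.1])]
      exact fun s hs => ⟨by linarith [hs.1, ht₀'.1], hs.2.trans ht₀'.2⟩
    nlinarith [hloc.sub_mul_nonpos_of_hasDerivWithinAt hd hseg, ht₀'.1]
  linarith

def IsSubsolution_s19 (K τ a b : ℝ) (g : ℝ → ℝ → ℝ) : Prop :=
  ∀ t ∈ Ioc 0 τ, ∀ x ∈ Ioo a b, 0 < g t x →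
    ∃ d, HasDerivWithinAt (fun s => g s x) d (Ioc 0 τ) t ∧ d ≤ deriv (deriv (g t)) x + K * g t x

theorem IsSubsolution_s19.nonpos {K τ a b : ℝ} {g : ℝ → ℝ → ℝ} (hsub : IsSubsolution_s19 K τ a b g)
    (hg : ContinuousOn (fun q : ℝ × ℝ => g q.1 q.2) (Icc 0 τ ×ˢ Icc a b))
    (hbdry : ∀ t ∈ Icc 0 τ, g t a ≤ 0 ∧ g t b ≤ 0) (hinit : ∀ x ∈ Icc a b, g 0 x ≤ 0) :
    ∀ t ∈ Icc 0 τ, ∀ x ∈ Icc a b, g t x ≤ 0 := by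
  -- `e^{-(K+1)t} g` is a strict subsolution of the heat equation where it is positive
  set e : ℝ → ℝ := fun t => Real.exp (-(K + 1) * t) with he_def
  have he : ∀ t, 0 < e t := fun t => Real.exp_pos _
  have hw := nonpos_of_strict_subsolution (g := fun t x => e t * g t x) ?_ ?_
    (fun t ht => ⟨mul_nonpos_of_nonneg_of_nonpos (he t).le (hbdry t ht).1,
      mul_nonpos_of_nonneg_of_nonpos (he t).le (hbdry t ht).2⟩)
    (fun x hx => mul_nonpos_of_nonneg_of_nonpos (he 0).le (hinit x hx))
  · exact fun t ht x hx => nonpos_of_mul_nonpos_right (hw t ht x hx) (he t)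
  · exact (Continuous.continuousOn (by fun_prop)).mul hg
  · intro t ht x hx hpos
    obtain ⟨d, hd, hle⟩ := hsub t ht x hx (pos_of_mul_pos_right hpos (he t).le)
    have he' : HasDerivAt e (e t * (-(K + 1))) t := by
      simpa [he_def] using ((hasDerivAt_id t).const_mul (-(K + 1))).exp
    refine ⟨_, he'.hasDerivWithinAt.mul hd, ?_⟩
    have hxx : deriv (deriv fun y => e t * g t y) x = e t * deriv (deriv (g t)) x := by
      simp only [deriv_const_mul_field']
    rw [hxx]
    nlinarith [he t, mul_pos (he t) (pos_of_mul_pos_right hpos (he t).le)]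

structure SolvesReactionDiffusion (V f : ℝ → ℝ) (τ : ℝ) (u : ℝ → ℝ → ℝ) : Prop where
  continuousOn : ContinuousOn (fun q : ℝ × ℝ => u q.1 q.2) (Icc 0 τ ×ˢ Icc (-1) 1)
  differentiableWithinAt : ∀ t ∈ Ioc 0 τ, ∀ x ∈ Ioo (-1 : ℝ) 1,
    DifferentiableWithinAt ℝ (fun s => u s x) (Ioc 0 τ) t
  contDiffAt : ∀ t ∈ Ioc 0 τ, ∀ x ∈ Ioo (-1 : ℝ) 1, ContDiffAt ℝ 2 (u t) x
  derivWithin_eq : ∀ t ∈ Ioc 0 τ, ∀ x ∈ Ioo (-1 : ℝ) 1,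
    derivWithin (fun s => u s x) (Ioc 0 τ) t = deriv (deriv (u t)) x + V x * f (u t x)

namespace SolvesReactionDiffusion

variable {V f : ℝ → ℝ} {τ : ℝ} {u : ℝ → ℝ → ℝ}

theorem comp_neg (hu : SolvesReactionDiffusion V f τ u)
    (hV : ∀ x ∈ Icc (-1 : ℝ) 1, V (-x) = V x) :
    SolvesReactionDiffusion V f τ (fun t x => u t (-x)) where
  continuousOn := hu.continuousOn.comp
    (Continuous.continuousOn (f := fun q : ℝ × ℝ => (q.1, -q.2)) (by fun_prop))
    fun q hq => ⟨hq.1, by linarith [hq.2.2], by linarith [hq.2.1]⟩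
  differentiableWithinAt t ht x hx :=
    hu.differentiableWithinAt t ht (-x) ⟨by linarith [hx.2], by linarith [hx.1]⟩
  contDiffAt t ht x hx :=
    (hu.contDiffAt t ht (-x) ⟨by linarith [hx.2], by linarith [hx.1]⟩).comp x contDiffAt_id.neg
  derivWithin_eq t ht x hx := by
    rw [deriv_deriv_comp_neg, ← hV x (Ioo_subset_Icc_self hx)]
    exact hu.derivWithin_eq t ht (-x) ⟨by linarith [hx.2], by linarith [hx.1]⟩

theorem isSubsolution_sub_reflect (hu : SolvesReactionDiffusion V f τ u)
    (hf_nonneg : ∀ s ≥ (0 : ℝ), 0 ≤ f s) (hV_nonneg : ∀ x ∈ Icc (-1 : ℝ) 1, 0 ≤ V x)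
    (hu_nonneg : ∀ t ∈ Icc 0 τ, ∀ x ∈ Icc (-1 : ℝ) 1, 0 ≤ u t x)
    {M Vmax : ℝ} {Lf : ℝ≥0} (hM : ∀ t ∈ Icc 0 τ, ∀ x ∈ Icc (-1 : ℝ) 1, u t x ≤ M)
    (hLf : LipschitzOnWith Lf f (Icc 0 M)) (hVmax : ∀ x ∈ Icc (-1 : ℝ) 1, V x ≤ Vmax)
    {c b : ℝ} (hb : b ≤ 1) (hcb : -1 ≤ 2 * c - b) (hV : ∀ x ∈ Icc c b, V x ≤ V (2 * c - x)) :
    IsSubsolution_s19 (Vmax * Lf) τ c b (fun t x => u t x - u t (2 * c - x)) := by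
  intro t ht x hx hpos
  have hx₁ : x ∈ Ioo (-1 : ℝ) 1 := ⟨by linarith [hx.1, hx.2], by linarith [hx.2]⟩
  have hx₂ : 2 * c - x ∈ Ioo (-1 : ℝ) 1 := ⟨by linarith [hx.2], by linarith [hx.1, hx.2]⟩
  refine ⟨_, (hu.differentiableWithinAt t ht x hx₁).hasDerivWithinAt.sub
    (hu.differentiableWithinAt t ht _ hx₂).hasDerivWithinAt, ?_⟩
  rw [hu.derivWithin_eq t ht x hx₁, hu.derivWithin_eq t ht _ hx₂,
    deriv_deriv_sub_comp_const_sub (hu.contDiffAt t ht x hx₁) (hu.contDiffAt t ht _ hx₂)]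
  have ht' : t ∈ Icc 0 τ := Ioc_subset_Icc_self ht
  set p := u t x
  set q := u t (2 * c - x)
  have hq : 0 ≤ q := hu_nonneg t ht' _ (Ioo_subset_Icc_self hx₂)
  have hqp : q ≤ p := by simp only at hpos; linarith
  have hlip : f p - f q ≤ Lf * (p - q) := by
    have := hLf.dist_le_mul p ⟨hq.trans hqp, hM t ht' x (Ioo_subset_Icc_self hx₁)⟩ q
      ⟨hq, (hqp.trans (hM t ht' x (Ioo_subset_Icc_self hx₁)))⟩
    rw [Real.dist_eq, Real.dist_eq, abs_of_nonneg (sub_nonneg.2 hqp)] at this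
    exact (le_abs_self _).trans this
  have hVx := hV_nonneg x (Ioo_subset_Icc_self hx₁)
  -- `V x f(p) - V x' f(q) = V x (f p - f q) + (V x - V x') f q`, and the last term is `≤ 0`
  have hgrowth : V x * (f p - f q) ≤ Vmax * (Lf * (p - q)) :=
    (mul_le_mul_of_nonneg_left hlip hVx).trans (mul_le_mul_of_nonneg_right
      (hVmax x (Ioo_subset_Icc_self hx₁)) (mul_nonneg Lf.2 (sub_nonneg.2 hqp)))
  have hsign : (V x - V (2 * c - x)) * f q ≤ 0 :=
    mul_nonpos_of_nonpos_of_nonneg (sub_nonpos.2 (hV x (Ioo_subset_Icc_self hx))) (hf_nonneg q hq)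
  linarith

theorem le_reflect (hu : SolvesReactionDiffusion V f τ u)
    (hf : LocallyLipschitzOn (Ici 0) f) (hf_nonneg : ∀ s ≥ (0 : ℝ), 0 ≤ f s)
    (hV : BddAbove (V '' Icc (-1) 1)) (hV_nonneg : ∀ x ∈ Icc (-1 : ℝ) 1, 0 ≤ V x)
    (hu_nonneg : ∀ t ∈ Icc 0 τ, ∀ x ∈ Icc (-1 : ℝ) 1, 0 ≤ u t x)
    {c b : ℝ} (hb : b ≤ 1) (hcb : -1 ≤ 2 * c - b)
    (hV_le : ∀ x ∈ Icc c b, V x ≤ V (2 * c - x))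
    (h_init : ∀ x ∈ Icc c b, u 0 x ≤ u 0 (2 * c - x))
    (h_bdry : ∀ t ∈ Icc 0 τ, u t b ≤ u t (2 * c - b)) :
    ∀ t ∈ Icc 0 τ, ∀ x ∈ Icc c b, u t x ≤ u t (2 * c - x) := by
  obtain ⟨M, hM⟩ := (isCompact_Icc.prod isCompact_Icc).bddAbove_image hu.continuousOn
  obtain ⟨Lf, hLf⟩ := (hf.mono Icc_subset_Ici_self).exists_lipschitzOnWith_of_compact
    (isCompact_Icc (a := 0) (b := M))
  obtain ⟨Vmax, hVmax⟩ := hV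
  have hsub := hu.isSubsolution_sub_reflect hf_nonneg hV_nonneg hu_nonneg
    (fun t ht x hx => hM ⟨(t, x), ⟨ht, hx⟩, rfl⟩) hLf (fun x hx => hVmax ⟨x, hx, rfl⟩) hb hcb hV_le
  have hmem : ∀ x ∈ Icc c b, x ∈ Icc (-1 : ℝ) 1 ∧ 2 * c - x ∈ Icc (-1 : ℝ) 1 := fun x hx =>
    ⟨⟨by linarith [hx.1, hx.2], by linarith [hx.2]⟩, ⟨by linarith [hx.2], by linarith [hx.1, hx.2]⟩⟩
  have hcont : ContinuousOn (fun q : ℝ × ℝ => u q.1 q.2 - u q.1 (2 * c - q.2))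
      (Icc 0 τ ×ˢ Icc c b) :=
    (hu.continuousOn.mono (prod_mono_right fun x hx => (hmem x hx).1)).sub
      (hu.continuousOn.comp
        (Continuous.continuousOn (f := fun q : ℝ × ℝ => (q.1, 2 * c - q.2)) (by fun_prop))
        fun q hq => ⟨hq.1, (hmem q.2 hq.2).2⟩)
  intro t ht x hx
  have := hsub.nonpos hcont (fun t ht => ⟨by simp [two_mul], sub_nonpos.2 (h_bdry t ht)⟩)
    (fun x hx => sub_nonpos.2 (h_init x hx)) t ht x hx
  exact sub_nonpos.1 this

end SolvesReactionDiffusion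

theorem antitoneOn_of_derivWithin_nonpos {φ : ℝ → ℝ} {s D : Set ℝ} (hD : Convex ℝ D)
    (hDs : D ⊆ s) (hφ : DifferentiableOn ℝ φ s) (hφ' : ∀ x ∈ D, derivWithin φ s x ≤ 0) :
    AntitoneOn φ D :=
  antitoneOn_of_hasDerivWithinAt_nonpos hD (hφ.continuousOn.mono hDs)
    (fun x hx => (hφ x (hDs (interior_subset hx))).hasDerivWithinAt.mono
      (interior_subset.trans hDs))
    fun x hx => hφ' x (interior_subset hx)

def IsCenterDominated (L : ℝ) (φ : ℝ → ℝ) : Prop :=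
  ∀ x y, x ≤ 1 → |y| ≤ x → |y| ≤ L → φ x ≤ φ y

theorem isCenterDominated_of_antitoneOn {φ : ℝ → ℝ} {L : ℝ} (hanti : AntitoneOn φ (Icc 0 L))
    (hbd : ∀ x ∈ Icc L 1, φ x ≤ φ L) (heven : ∀ x ∈ Icc (-1 : ℝ) 1, φ (-x) = φ x) :
    IsCenterDominated L φ := by
  intro x y hx hyx hyL
  have hy : φ |y| = φ y := by
    rcases abs_cases y with ⟨h, -⟩ | ⟨h, -⟩
    · rw [h]
    · rw [h, heven y (abs_le.1 (hyx.trans hx))]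
  rw [← hy]
  rcases le_total x L with hxL | hLx
  · exact hanti ⟨abs_nonneg y, hyL⟩ ⟨(abs_nonneg y).trans hyx, hxL⟩ hyx
  · exact (hbd x ⟨hLx, hx⟩).trans
      (hanti ⟨abs_nonneg y, hyL⟩ ⟨(abs_nonneg y).trans hyL, le_rfl⟩ hyL)

namespace IsCenterDominated

variable {L : ℝ} {φ : ℝ → ℝ}

theorem congr {ψ : ℝ → ℝ} (h : IsCenterDominated L φ) (hφψ : EqOn φ ψ (Icc (-1) 1)) :
    IsCenterDominated L ψ := by
  intro x y hx hyx hyL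
  have hy : y ∈ Icc (-1 : ℝ) 1 := abs_le.1 (hyx.trans hx)
  rw [← hφψ ⟨by linarith [abs_nonneg y], hx⟩, ← hφψ hy]
  exact h x y hx hyx hyL

theorem le_reflect (h : IsCenterDominated L φ) {c x : ℝ} (hc : 0 ≤ c) (hcx : c ≤ x)
    (hx : x ≤ 1) (hxL : |2 * c - x| ≤ L) : φ x ≤ φ (2 * c - x) :=
  h x _ hx (abs_le.2 ⟨by linarith, by linarith⟩) hxL

end IsCenterDominated

theorem deriv_nonpos_of_forall_le_reflect {φ : ℝ → ℝ} {L x : ℝ} (hL : 0 < L)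
    (hφ : ∀ c ∈ Icc 0 L, ∀ y ∈ Icc c (min 1 (L + c)), φ y ≤ φ (2 * c - y))
    (hx : x ∈ Icc 0 L) (hx1 : x < 1) (hφx : DifferentiableAt ℝ φ x) : deriv φ x ≤ 0 := by
  refine deriv_nonpos_of_le_reflect hφx ?_
  filter_upwards [Icc_mem_nhdsGE (lt_min (sub_pos.2 hx1) hL)] with h hh
  have hh1 := hh.2.trans (min_le_left _ _)
  have hhL := hh.2.trans (min_le_right _ _)
  have := hφ x hx (x + h) ⟨by linarith [hh.1], le_min (by linarith) (by linarith)⟩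
  rwa [show 2 * x - (x + h) = x - h by ring] at this

theorem le_apply_zero_of_forall_le_reflect {φ : ℝ → ℝ} {L : ℝ} (hL : 1 / 3 ≤ L) (hL1 : L ≤ 1)
    (heven : ∀ x ∈ Icc (-1 : ℝ) 1, φ (-x) = φ x) (hφL : ∀ x ∈ Icc L 1, φ x ≤ φ (2 * L - x))
    (hφ : ∀ c ∈ Icc 0 L, ∀ y ∈ Icc c (min 1 (L + c)), φ y ≤ φ (2 * c - y)) :
    ∀ x ∈ Icc (-1 : ℝ) 1, φ x ≤ φ 0 := by
  have habs : ∀ x ∈ Icc (-1 : ℝ) 1, φ x = φ |x| := by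
    intro x hx
    rcases abs_cases x with ⟨h, -⟩ | ⟨h, -⟩
    · rw [h]
    · rw [h, heven x hx]
  have hcenter : ∀ z, |z| ≤ L → φ z ≤ φ 0 := by
    intro z hz
    have hz0 := abs_nonneg z
    rw [habs z (abs_le.1 (hz.trans hL1))]
    -- the plane through `|z| / 2` reflects `|z|` onto `0`
    have := hφ (|z| / 2) ⟨by positivity, by linarith⟩ |z|
      ⟨by linarith, le_min (by linarith) (by linarith)⟩
    rwa [show 2 * (|z| / 2) - |z| = 0 by ring] at this
  intro x hx
  have hx1 : |x| ≤ 1 := abs_le.2 hx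
  rw [habs x hx]
  rcases le_total |x| L with h | h
  · exact hcenter _ ((abs_abs x).le.trans h)
  · exact (hφL |x| ⟨h, hx1⟩).trans (hcenter _ (abs_le.2 ⟨by linarith, by linarith⟩))

namespace SolvesReactionDiffusion

variable {V f : ℝ → ℝ} {τ L : ℝ} {u : ℝ → ℝ → ℝ}

theorem even (hu : SolvesReactionDiffusion V f τ u)
    (hf : LocallyLipschitzOn (Ici 0) f) (hf_nonneg : ∀ s ≥ (0 : ℝ), 0 ≤ f s)
    (hV : BddAbove (V '' Icc (-1) 1)) (hV_nonneg : ∀ x ∈ Icc (-1 : ℝ) 1, 0 ≤ V x)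
    (hu_nonneg : ∀ t ∈ Icc 0 τ, ∀ x ∈ Icc (-1 : ℝ) 1, 0 ≤ u t x)
    (hV_even : ∀ x ∈ Icc (-1 : ℝ) 1, V (-x) = V x)
    (h_init : ∀ x ∈ Icc (-1 : ℝ) 1, u 0 (-x) = u 0 x)
    (h_bdry : ∀ t ∈ Icc 0 τ, u t (-1) = 0 ∧ u t 1 = 0) :
    ∀ t ∈ Icc 0 τ, ∀ x ∈ Icc (-1 : ℝ) 1, u t (-x) = u t x := by
  have hhalf : ∀ w : ℝ → ℝ → ℝ, SolvesReactionDiffusion V f τ w →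
      (∀ t ∈ Icc 0 τ, ∀ x ∈ Icc (-1 : ℝ) 1, 0 ≤ w t x) →
      (∀ x ∈ Icc (-1 : ℝ) 1, w 0 (-x) = w 0 x) → (∀ t ∈ Icc 0 τ, w t 1 = 0) →
      ∀ t ∈ Icc 0 τ, ∀ x ∈ Icc (0 : ℝ) 1, w t x ≤ w t (-x) := by
    intro w hw hw_nonneg hw_init hw_bdry t ht x hx
    have hmem : ∀ x ∈ Icc (0 : ℝ) 1, x ∈ Icc (-1 : ℝ) 1 := fun x hx => ⟨by linarith [hx.1], hx.2⟩
    simpa using hw.le_reflect hf hf_nonneg hV hV_nonneg hw_nonneg (c := 0) le_rfl (by norm_num)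
      (fun x hx => by rw [mul_zero, zero_sub, hV_even x (hmem x hx)])
      (fun x hx => by rw [mul_zero, zero_sub, hw_init x (hmem x hx)])
      (fun t ht => by rw [hw_bdry t ht]; exact hw_nonneg t ht _ (by norm_num)) t ht x hx
  have hle := hhalf u hu hu_nonneg h_init fun t ht => (h_bdry t ht).2
  have hge := hhalf _ (hu.comp_neg hV_even)
    (fun t ht x hx => hu_nonneg t ht (-x) ⟨by linarith [hx.2], by linarith [hx.1]⟩)
    (fun x hx => by simp only [neg_neg]; exact (h_init x hx).symm) fun t ht => (h_bdry t ht).1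
  simp only [neg_neg] at hge
  intro t ht x hx
  rcases le_total 0 x with h | h
  · exact le_antisymm (hge t ht x ⟨h, hx.2⟩) (hle t ht x ⟨h, hx.2⟩)
  · have hx' : -x ∈ Icc (0 : ℝ) 1 := ⟨by linarith, by linarith [hx.1]⟩
    have := le_antisymm (hge t ht (-x) hx') (hle t ht (-x) hx')
    rwa [neg_neg, eq_comm] at this

theorem le_reflect_of_isCenterDominated (hu : SolvesReactionDiffusion V f τ u)
    (hf : LocallyLipschitzOn (Ici 0) f) (hf_nonneg : ∀ s ≥ (0 : ℝ), 0 ≤ f s)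
    (hV : BddAbove (V '' Icc (-1) 1)) (hV_nonneg : ∀ x ∈ Icc (-1 : ℝ) 1, 0 ≤ V x)
    (hu_nonneg : ∀ t ∈ Icc 0 τ, ∀ x ∈ Icc (-1 : ℝ) 1, 0 ≤ u t x)
    (hV_dom : IsCenterDominated L V) (hu₀_dom : IsCenterDominated L (u 0))
    {c b : ℝ} (hc : 0 ≤ c) (hcL : c ≤ L) (hb : b ≤ 1) (hbL : b ≤ 2 * c + L)
    (h_bdry : ∀ t ∈ Icc 0 τ, u t b ≤ u t (2 * c - b)) :
    ∀ t ∈ Icc 0 τ, ∀ x ∈ Icc c b, u t x ≤ u t (2 * c - x) := by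
  have habs : ∀ x ∈ Icc c b, |2 * c - x| ≤ L := fun x hx =>
    abs_le.2 ⟨by linarith [hx.2], by linarith [hx.1]⟩
  exact hu.le_reflect hf hf_nonneg hV hV_nonneg hu_nonneg hb (by linarith)
    (fun x hx => hV_dom.le_reflect hc hx.1 (hx.2.trans hb) (habs x hx))
    (fun x hx => hu₀_dom.le_reflect hc hx.1 (hx.2.trans hb) (habs x hx)) h_bdry

theorem le_reflect_through_L (hu : SolvesReactionDiffusion V f τ u)
    (hf : LocallyLipschitzOn (Ici 0) f) (hf_nonneg : ∀ s ≥ (0 : ℝ), 0 ≤ f s)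
    (hV : BddAbove (V '' Icc (-1) 1)) (hV_nonneg : ∀ x ∈ Icc (-1 : ℝ) 1, 0 ≤ V x)
    (hu_nonneg : ∀ t ∈ Icc 0 τ, ∀ x ∈ Icc (-1 : ℝ) 1, 0 ≤ u t x)
    (hV_dom : IsCenterDominated L V) (hu₀_dom : IsCenterDominated L (u 0))
    (hL : 1 / 3 ≤ L) (hL1 : L ≤ 1) (h_bdry : ∀ t ∈ Icc 0 τ, u t 1 = 0) :
    ∀ t ∈ Icc 0 τ, ∀ x ∈ Icc L 1, u t x ≤ u t (2 * L - x) :=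
  hu.le_reflect_of_isCenterDominated hf hf_nonneg hV hV_nonneg hu_nonneg hV_dom hu₀_dom
    (by linarith) le_rfl le_rfl (by linarith) fun t ht => by
      rw [h_bdry t ht]; exact hu_nonneg t ht _ ⟨by linarith, by linarith⟩

theorem le_reflect_through_le_L (hu : SolvesReactionDiffusion V f τ u)
    (hf : LocallyLipschitzOn (Ici 0) f) (hf_nonneg : ∀ s ≥ (0 : ℝ), 0 ≤ f s)
    (hV : BddAbove (V '' Icc (-1) 1)) (hV_nonneg : ∀ x ∈ Icc (-1 : ℝ) 1, 0 ≤ V x)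
    (hu_nonneg : ∀ t ∈ Icc 0 τ, ∀ x ∈ Icc (-1 : ℝ) 1, 0 ≤ u t x)
    (hV_dom : IsCenterDominated L V) (hu₀_dom : IsCenterDominated L (u 0)) (hL1 : L ≤ 1)
    (h_bdry : ∀ t ∈ Icc 0 τ, u t 1 = 0)
    (heven : ∀ t ∈ Icc 0 τ, ∀ x ∈ Icc (-1 : ℝ) 1, u t (-x) = u t x)
    (hL_plane : ∀ t ∈ Icc 0 τ, ∀ x ∈ Icc L 1, u t x ≤ u t (2 * L - x)) :
    ∀ c ∈ Icc 0 L, ∀ t ∈ Icc 0 τ, ∀ x ∈ Icc c (min 1 (L + c)), u t x ≤ u t (2 * c - x) := by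
  intro c hc
  refine hu.le_reflect_of_isCenterDominated hf hf_nonneg hV hV_nonneg hu_nonneg hV_dom hu₀_dom
    hc.1 hc.2 (min_le_left _ _) (by linarith [min_le_right 1 (L + c), hc.1]) fun t ht => ?_
  rcases min_cases 1 (L + c) with ⟨hmin, -⟩ | ⟨hmin, h⟩
  · rw [hmin, h_bdry t ht]; exact hu_nonneg t ht _ ⟨by linarith [hc.1], by linarith [hc.2]⟩
  · -- the reflection through `L` sends `L + c` to `L - c`, the mirror image of `c - L`
    have := hL_plane t ht (L + c) ⟨by linarith [hc.1], h.le⟩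
    rwa [hmin, show 2 * c - (L + c) = -(L - c) by ring,
      heven t ht _ ⟨by linarith [hc.2], by linarith [hc.1]⟩,
      ← show 2 * L - (L + c) = L - c by ring]

end SolvesReactionDiffusion

theorem stmt19_general
    (f : ℝ → ℝ)
    (hf_C1 : ContDiffOn ℝ 1 f (Ici 0)) (hf_nonneg : ∀ s ≥ (0:ℝ), 0 ≤ f s)
    (V u₀ : ℝ → ℝ)
    (hV_C1 : ContDiffOn ℝ 1 V (Icc (-1) 1)) (hu₀_C1 : ContDiffOn ℝ 1 u₀ (Icc (-1) 1))
    (hV_nonneg : ∀ x ∈ Icc (-1:ℝ) 1, 0 ≤ V x)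
    (hV_even : ∀ x ∈ Icc (-1:ℝ) 1, V (-x) = V x) (hu₀_even : ∀ x ∈ Icc (-1:ℝ) 1, u₀ (-x) = u₀ x)
    (hu₀1 : u₀ 1 = 0)
    (L : ℝ) (hL : L ∈ Ico (1/3 : ℝ) 1)
    (hV' : ∀ x ∈ Icc (0:ℝ) L, derivWithin V (Icc (-1) 1) x ≤ 0)
    (hu₀' : ∀ x ∈ Icc (0:ℝ) L, derivWithin u₀ (Icc (-1) 1) x ≤ 0)
    (hVbd : ∀ x ∈ Icc L (1:ℝ), V x ≤ V L)
    (hu₀bd : ∀ x ∈ Icc L (1:ℝ), u₀ x ≤ u₀ L)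
    (τ : ℝ)
    (u : ℝ → ℝ → ℝ)
    (hu_cont : ContinuousOn (fun q : ℝ × ℝ => u q.1 q.2) (Icc 0 τ ×ˢ Icc (-1) 1))
    (hu_nonneg : ∀ t ∈ Icc 0 τ, ∀ x ∈ Icc (-1:ℝ) 1, 0 ≤ u t x)
    (hu_reg : ∀ t ∈ Ioc 0 τ, ∀ x ∈ Ioo (-1:ℝ) 1,
      DifferentiableWithinAt ℝ (fun s => u s x) (Ioc 0 τ) t ∧ ContDiffAt ℝ 2 (u t) x)
    (heq : ∀ t ∈ Ioc 0 τ, ∀ x ∈ Ioo (-1:ℝ) 1,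
      derivWithin (fun s => u s x) (Ioc 0 τ) t = deriv (deriv (u t)) x + V x * f (u t x))
    (hbc : ∀ t ∈ Ioc 0 τ, u t (-1) = 0 ∧ u t 1 = 0)
    (hic : ∀ x ∈ Icc (-1:ℝ) 1, u 0 x = u₀ x) :
    (∀ t ∈ Ioc 0 τ, ∀ x ∈ Icc (0:ℝ) L, deriv (u t) x ≤ 0) ∧
    (∀ t ∈ Ioo 0 τ, ∀ x ∈ Icc (-1:ℝ) 1, u t x ≤ u t 0) := by
  obtain ⟨hL, hL1⟩ := hL
  have hu : SolvesReactionDiffusion V f τ u :=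
    ⟨hu_cont, fun t ht x hx => (hu_reg t ht x hx).1, fun t ht x hx => (hu_reg t ht x hx).2, heq⟩
  have hf := hf_C1.locallyLipschitzOn (convex_Ici 0)
  have hV := isCompact_Icc.bddAbove_image hV_C1.continuousOn
  have hsub : Icc 0 L ⊆ Icc (-1 : ℝ) 1 := Icc_subset_Icc (by norm_num) hL1.le
  have hV_dom : IsCenterDominated L V := isCenterDominated_of_antitoneOn
    (antitoneOn_of_derivWithin_nonpos (convex_Icc 0 L) hsub
      (hV_C1.differentiableOn one_ne_zero) hV') hVbd hV_even
  have hu₀_dom : IsCenterDominated L (u 0) := (isCenterDominated_of_antitoneOn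
    (antitoneOn_of_derivWithin_nonpos (convex_Icc 0 L) hsub
      (hu₀_C1.differentiableOn one_ne_zero) hu₀') hu₀bd hu₀_even).congr
    fun x hx => (hic x hx).symm
  have h_init : ∀ x ∈ Icc (-1 : ℝ) 1, u 0 (-x) = u 0 x := fun x hx => by
    rw [hic x hx, hic (-x) ⟨by linarith [hx.2], by linarith [hx.1]⟩, hu₀_even x hx]
  have h_bdry : ∀ t ∈ Icc 0 τ, u t (-1) = 0 ∧ u t 1 = 0 := by
    rintro t ⟨ht0, htτ⟩
    rcases ht0.eq_or_lt with rfl | ht0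
    · have h1 : u 0 1 = 0 := by rw [hic 1 (by norm_num), hu₀1]
      exact ⟨by rw [h_init 1 (by norm_num), h1], h1⟩
    · exact hbc t ⟨ht0, htτ⟩
  have heven := hu.even hf hf_nonneg hV hV_nonneg hu_nonneg hV_even h_init h_bdry
  have hL_plane := hu.le_reflect_through_L hf hf_nonneg hV hV_nonneg hu_nonneg hV_dom hu₀_dom
    hL hL1.le fun t ht => (h_bdry t ht).2
  have hplanes := hu.le_reflect_through_le_L hf hf_nonneg hV hV_nonneg hu_nonneg hV_dom hu₀_dom
    hL1.le (fun t ht => (h_bdry t ht).2) heven hL_plane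
  refine ⟨fun t ht x hx => ?_, fun t ht => ?_⟩
  · have hx' : x ∈ Ioo (-1 : ℝ) 1 := ⟨by linarith [hx.1], by linarith [hx.2]⟩
    exact deriv_nonpos_of_forall_le_reflect (by linarith)
      (fun c hc => hplanes c hc t (Ioc_subset_Icc_self ht)) hx (by linarith [hx.2])
      ((hu_reg t ht x hx').2.differentiableAt (by norm_num))
  · have ht' : t ∈ Icc 0 τ := Ioo_subset_Icc_self ht
    exact le_apply_zero_of_forall_le_reflect hL hL1.le (heven t ht') (hL_plane t ht')
      fun c hc => hplanes c hc t ht'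

theorem stmt19
    (f : ℝ → ℝ)
    (hf_C1 : ContDiffOn ℝ 1 f (Ici 0)) (hf_nonneg : ∀ s ≥ (0:ℝ), 0 ≤ f s)
    (V u₀ : ℝ → ℝ)
    (hV_C1 : ContDiffOn ℝ 1 V (Icc (-1) 1)) (hu₀_C1 : ContDiffOn ℝ 1 u₀ (Icc (-1) 1))
    (hV_nonneg : ∀ x ∈ Icc (-1:ℝ) 1, 0 ≤ V x) (hu₀_nonneg : ∀ x ∈ Icc (-1:ℝ) 1, 0 ≤ u₀ x)
    (hV_even : ∀ x ∈ Icc (-1:ℝ) 1, V (-x) = V x) (hu₀_even : ∀ x ∈ Icc (-1:ℝ) 1, u₀ (-x) = u₀ x)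
    (hV0 : 0 < V 0) (hu₀0 : 0 < u₀ 0) (hu₀1 : u₀ 1 = 0)
    (L : ℝ) (hL : L ∈ Ico (1/3 : ℝ) 1)
    (hV' : ∀ x ∈ Icc (0:ℝ) L, derivWithin V (Icc (-1) 1) x ≤ 0)
    (hu₀' : ∀ x ∈ Icc (0:ℝ) L, derivWithin u₀ (Icc (-1) 1) x ≤ 0)
    (hVbd : ∀ x ∈ Icc L (1:ℝ), V x ≤ V L)
    (hu₀bd : ∀ x ∈ Icc L (1:ℝ), u₀ x ≤ u₀ L)
    (τ : ℝ) (hτ : 0 < τ)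
    (u : ℝ → ℝ → ℝ)
    (hu_cont : ContinuousOn (fun q : ℝ × ℝ => u q.1 q.2) (Icc 0 τ ×ˢ Icc (-1) 1))
    (hu_nonneg : ∀ t ∈ Icc 0 τ, ∀ x ∈ Icc (-1:ℝ) 1, 0 ≤ u t x)
    (hu_reg : ∀ t ∈ Ioc 0 τ, ∀ x ∈ Ioo (-1:ℝ) 1,
      DifferentiableWithinAt ℝ (fun s => u s x) (Ioc 0 τ) t ∧ ContDiffAt ℝ 2 (u t) x)
    (heq : ∀ t ∈ Ioc 0 τ, ∀ x ∈ Ioo (-1:ℝ) 1,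
      derivWithin (fun s => u s x) (Ioc 0 τ) t = deriv (deriv (u t)) x + V x * f (u t x))
    (hbc : ∀ t ∈ Ioc 0 τ, u t (-1) = 0 ∧ u t 1 = 0)
    (hic : ∀ x ∈ Icc (-1:ℝ) 1, u 0 x = u₀ x) :
    (∀ t ∈ Ioc 0 τ, ∀ x ∈ Icc (0:ℝ) L, deriv (u t) x ≤ 0) ∧
    (∀ t ∈ Ioo 0 τ, ∀ x ∈ Icc (-1:ℝ) 1, u t x ≤ u t 0) :=
  stmt19_general f hf_C1 hf_nonneg V u₀ hV_C1 hu₀_C1 hV_nonneg hV_even hu₀_even hu₀1 L hL hV' hu₀'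
    hVbd hu₀bd τ u hu_cont hu_nonneg hu_reg heq hbc hic
end
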